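/- arXiv:1810.10870 — 6 statements merged into one kernel-verified Lean document; each statement's English description precedes it below -/
import Mathlib

section
/- Let k ≥ 2 be a positive integer. Define Y = {kⁿ + k⁻ⁿ : n ≥ 1} ⊆ ℝ and X = Y ∪ (−Y) ∪ {0}. Then every sum of k elements of X is either equal to zero or has absolute value at least k − 1; in particular the k-fold sumset X + ⋯ + X intersects every compact subset of ℝ in a finite set. However, the (k+1)-fold sumset X + ⋯ + X contains k⁻⁽ⁿ⁺¹⁾ − k⁻⁽ⁿ⁻¹⁾ for all n ≥ 1, hence 0 is an accumulation point of the (k+1)-fold sumset and it is not discrete. -/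
open scoped Pointwise
open Filter Topology

/-- The `m`-fold sumset of `X ⊆ ℝ`. -/
def sumset (X : Set ℝ) (m : ℕ) : Set ℝ :=
  {s | ∃ f : Fin m → ℝ, (∀ i, f i ∈ X) ∧ s = ∑ i, f i}

/-- The basic building block `kⁿ + k⁻ⁿ`. -/
noncomputable def vv (k n : ℕ) : ℝ := (k:ℝ)^n + ((k:ℝ)^n)⁻¹

lemma vv_pos {k : ℕ} (hk : 2 ≤ k) (n : ℕ) : 0 < vv k n := by
  have hK : (0:ℝ) < (k:ℝ) := by
    have : (0:ℕ) < k := by omega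
    exact_mod_cast this
  unfold vv; positivity

lemma vv_le {k : ℕ} (hk : 2 ≤ k) {m N : ℕ} (hm : 1 ≤ m) (hmN : m ≤ N) :
    vv k m ≤ (k:ℝ)^N + ((k:ℝ))⁻¹ := by
  have hK : (1:ℝ) < (k:ℝ) := by exact_mod_cast (by omega : 1 < k)
  have h1 : (k:ℝ)^m ≤ (k:ℝ)^N := pow_le_pow_right₀ (le_of_lt hK) hmN
  have h2 : ((k:ℝ)^m)⁻¹ ≤ ((k:ℝ))⁻¹ := by
    apply inv_anti₀ (by linarith)
    calc (k:ℝ) = (k:ℝ)^1 := (pow_one _).symm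
    _ ≤ (k:ℝ)^m := pow_le_pow_right₀ (le_of_lt hK) hm
  unfold vv; linarith

/-- The gap lemma: a combination `∑ c m · vv m` with total weight at most `k` is either zero
or has absolute value at least `k - 1`, and moreover at least `k^(M-1) - 1` where `M` is a
top exponent beyond which the combination can be truncated. -/
lemma gap {k : ℕ} (hk : 2 ≤ k) (N : ℕ) (c : ℕ → ℤ)
    (hsum : ∑ m ∈ Finset.Icc 1 N, |c m| ≤ (k:ℤ)) :
    (∑ m ∈ Finset.Icc 1 N, (c m : ℝ) * vv k m = 0) ∨
    ∃ M, 1 ≤ M ∧ M ≤ N ∧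
      (∑ m ∈ Finset.Icc 1 N, (c m : ℝ) * vv k m
        = ∑ m ∈ Finset.Icc 1 M, (c m : ℝ) * vv k m) ∧
      (k:ℝ) - 1 ≤ |∑ m ∈ Finset.Icc 1 N, (c m : ℝ) * vv k m| ∧
      (k:ℝ)^(M-1) - 1 ≤ |∑ m ∈ Finset.Icc 1 N, (c m : ℝ) * vv k m| := by
  have hK : (1:ℝ) < (k:ℝ) := by exact_mod_cast (by omega : 1 < k)
  induction N with
  | zero => left; simp
  | succ N ih =>
    have hstep : ∑ m ∈ Finset.Icc 1 (N+1), (c m : ℝ) * vv k m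
        = (∑ m ∈ Finset.Icc 1 N, (c m : ℝ) * vv k m) + (c (N+1) : ℝ) * vv k (N+1) :=
      Finset.sum_Icc_succ_top (by omega) _
    have hstep' : (∑ m ∈ Finset.Icc 1 (N+1), |c m|) = (∑ m ∈ Finset.Icc 1 N, |c m|) + |c (N+1)| :=
      Finset.sum_Icc_succ_top (by omega) _
    rw [hstep'] at hsum
    by_cases hc : c (N+1) = 0
    · have h0 : ∑ m ∈ Finset.Icc 1 (N+1), (c m : ℝ) * vv k m
          = ∑ m ∈ Finset.Icc 1 N, (c m : ℝ) * vv k m := by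
        rw [hstep, hc]; simp
      rcases ih (by have := abs_nonneg (c (N+1)); omega) with h | ⟨M, hM1, hMN, heq, hb1, hb2⟩
      · left; rw [h0, h]
      · right; exact ⟨M, hM1, by omega, by rw [h0, heq], by rw [h0]; exact hb1, by rw [h0]; exact hb2⟩
    · right
      refine ⟨N+1, by omega, le_refl _, rfl, ?_⟩
      rw [hstep]
      have hc1 : (1:ℝ) ≤ |(c (N+1) : ℝ)| := by
        rw [← Int.cast_abs]
        exact_mod_cast Int.one_le_abs (by omega)
      set s := ∑ m ∈ Finset.Icc 1 N, (c m : ℝ) * vv k m with hs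
      set a := (c (N+1) : ℝ) * vv k (N+1) with ha
      have hva : vv k (N+1) ≤ |a| := by
        rw [ha, abs_mul, abs_of_pos (vv_pos hk (N+1))]
        exact le_mul_of_one_le_left (le_of_lt (vv_pos hk _)) hc1
      have hcsum : ((∑ m ∈ Finset.Icc 1 N, |c m| : ℤ) : ℝ) ≤ (k:ℝ) - 1 := by
        have h1 : (1:ℤ) ≤ |c (N+1)| := Int.one_le_abs (by omega)
        have : (∑ m ∈ Finset.Icc 1 N, |c m|) ≤ (k:ℤ) - 1 := by omega
        exact_mod_cast this
      have hspos : 0 ≤ (k:ℝ)^N + (k:ℝ)⁻¹ := by positivity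
      have hsb : |s| ≤ ((k:ℝ) - 1) * ((k:ℝ)^N + (k:ℝ)⁻¹) := by
        calc |s| ≤ ∑ m ∈ Finset.Icc 1 N, |(c m : ℝ) * vv k m| :=
              Finset.abs_sum_le_sum_abs _ _
        _ ≤ ∑ m ∈ Finset.Icc 1 N, |(c m : ℝ)| * ((k:ℝ)^N + (k:ℝ)⁻¹) := by
              apply Finset.sum_le_sum
              intro m hm
              rw [abs_mul, abs_of_pos (vv_pos hk m)]
              exact mul_le_mul_of_nonneg_left
                (vv_le hk (Finset.mem_Icc.1 hm).1 (Finset.mem_Icc.1 hm).2) (abs_nonneg _)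
        _ = ((∑ m ∈ Finset.Icc 1 N, |c m| : ℤ) : ℝ) * ((k:ℝ)^N + (k:ℝ)⁻¹) := by
              rw [← Finset.sum_mul]; push_cast; ring
        _ ≤ ((k:ℝ) - 1) * ((k:ℝ)^N + (k:ℝ)⁻¹) :=
              mul_le_mul_of_nonneg_right hcsum hspos
      have habs : |a| - |s| ≤ |s + a| := by
        have h1 : |a| ≤ |s + a| + |s| := by
          calc |a| = |(s + a) + (-s)| := by ring_nf
          _ ≤ |s + a| + |(-s)| := abs_add_le _ _
          _ = |s + a| + |s| := by rw [abs_neg]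
        linarith
      have hK0 : (k:ℝ) ≠ 0 := by positivity
      have hexp : ((k:ℝ) - 1) * ((k:ℝ)^N + (k:ℝ)⁻¹)
          = (k:ℝ) * (k:ℝ)^N - (k:ℝ)^N + 1 - (k:ℝ)⁻¹ := by
        field_simp; ring
      have hvv : vv k (N+1) = (k:ℝ) * (k:ℝ)^N + ((k:ℝ)^(N+1))⁻¹ := by
        unfold vv; rw [pow_succ]; ring
      have hinv1 : 0 < ((k:ℝ)^(N+1))⁻¹ := by positivity
      have hinv2 : 0 < ((k:ℝ))⁻¹ := by positivity
      have hlow : (k:ℝ)^N + ((k:ℝ)^(N+1))⁻¹ + (k:ℝ)⁻¹ - 1 ≤ |s + a| := by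
        have := habs
        rw [hvv] at hva
        linarith [hexp ▸ hsb]
      constructor
      · rcases Nat.eq_zero_or_pos N with hN0 | hN1
        · subst hN0
          have hs0 : s = 0 := by rw [hs]; simp
          rw [hs0, zero_add]
          have h2 : vv k (0+1) ≤ |a| := hva
          have : (k:ℝ) ≤ |a| := by
            have h3 : 0 < ((k:ℝ)^(0+1))⁻¹ := by positivity
            unfold vv at h2; rw [pow_one] at h2
            have h4 : 0 < ((k:ℝ))⁻¹ := by positivity
            linarith
          linarith
        · have hKN : (k:ℝ) ≤ (k:ℝ)^N := by
            calc (k:ℝ) = (k:ℝ)^1 := (pow_one _).symm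
            _ ≤ (k:ℝ)^N := pow_le_pow_right₀ (le_of_lt hK) hN1
          linarith
      · have : (N+1) - 1 = N := by omega
        rw [this]
        linarith

/-- Representation lemma: every element of the `m`-fold sumset of `X` is an integer
combination of the `vv k n`, `n ≥ 1`, with total weight at most `m`. -/
lemma rep {k : ℕ} {Y X : Set ℝ}
    (hY : Y = {x : ℝ | ∃ n : ℕ, 1 ≤ n ∧ x = (k : ℝ) ^ n + ((k : ℝ) ^ n)⁻¹})
    (hX : X = Y ∪ (-Y) ∪ {0}) (m : ℕ) (s : ℝ) (hs : s ∈ sumset X m) :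
    ∃ N : ℕ, ∃ c : ℕ → ℤ, (∑ t ∈ Finset.Icc 1 N, |c t| ≤ (m:ℤ)) ∧
      s = ∑ t ∈ Finset.Icc 1 N, (c t : ℝ) * vv k t := by
  obtain ⟨f, hf, hsum⟩ := hs
  have hrep : ∀ i : Fin m, ∃ en : ℤ × ℕ, |en.1| ≤ 1 ∧ 1 ≤ en.2 ∧ f i = (en.1 : ℝ) * vv k en.2 := by
    intro i
    have hfi := hf i
    rw [hX] at hfi
    rcases hfi with (hY' | hnY) | h0
    · rw [hY] at hY'
      obtain ⟨n, hn, he⟩ := hY'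
      exact ⟨(1, n), by norm_num, hn, by simp [vv, he]⟩
    · rw [Set.mem_neg, hY] at hnY
      obtain ⟨n, hn, he⟩ := hnY
      refine ⟨(-1, n), by norm_num, hn, ?_⟩
      simp only [vv]
      push_cast
      linarith
    · refine ⟨(0, 1), by norm_num, le_refl 1, ?_⟩
      simp only [Set.mem_singleton_iff] at h0
      simp [h0]
  choose en h1 h2 h3 using hrep
  set e : Fin m → ℤ := fun i => (en i).1 with he
  set n : Fin m → ℕ := fun i => (en i).2 with hn
  set N := Finset.univ.sup n with hN
  have hmem : ∀ i, n i ∈ Finset.Icc 1 N :=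
    fun i => Finset.mem_Icc.2 ⟨h2 i, Finset.le_sup (Finset.mem_univ i)⟩
  refine ⟨N, fun t => ∑ i, if n i = t then e i else 0, ?_, ?_⟩
  · calc ∑ t ∈ Finset.Icc 1 N, |∑ i, if n i = t then e i else 0|
        ≤ ∑ t ∈ Finset.Icc 1 N, ∑ i, |if n i = t then e i else 0| :=
          Finset.sum_le_sum fun t _ => Finset.abs_sum_le_sum_abs _ _
    _ ≤ ∑ t ∈ Finset.Icc 1 N, ∑ i, (if n i = t then 1 else 0) := by
          refine Finset.sum_le_sum fun t _ => Finset.sum_le_sum fun i _ => ?_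
          split
          · exact h1 i
          · simp
    _ = ∑ i : Fin m, ∑ t ∈ Finset.Icc 1 N, (if n i = t then 1 else 0) := Finset.sum_comm
    _ = ∑ i : Fin m, 1 := by
          refine Finset.sum_congr rfl fun i _ => ?_
          rw [Finset.sum_ite_eq]
          simp [hmem i]
    _ = (m:ℤ) := by simp
  · calc s = ∑ i, f i := hsum
    _ = ∑ i, (e i : ℝ) * vv k (n i) := Finset.sum_congr rfl fun i _ => h3 i
    _ = ∑ i : Fin m, ∑ t ∈ Finset.Icc 1 N, (if n i = t then (e i : ℝ) * vv k t else 0) := by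
          refine Finset.sum_congr rfl fun i _ => ?_
          rw [Finset.sum_ite_eq]
          simp [hmem i]
    _ = ∑ t ∈ Finset.Icc 1 N, ∑ i : Fin m, (if n i = t then (e i : ℝ) * vv k t else 0) :=
          Finset.sum_comm
    _ = ∑ t ∈ Finset.Icc 1 N, ((∑ i, if n i = t then e i else 0 : ℤ) : ℝ) * vv k t := by
          refine Finset.sum_congr rfl fun t _ => ?_
          push_cast
          rw [Finset.sum_mul]
          refine Finset.sum_congr rfl fun i _ => ?_
          split <;> simp

/-- The explicit small elements of the `(k+1)`-fold sumset. -/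
lemma mem3 {k : ℕ} (hk : 2 ≤ k) {Y X : Set ℝ}
    (hY : Y = {x : ℝ | ∃ n : ℕ, 1 ≤ n ∧ x = (k : ℝ) ^ n + ((k : ℝ) ^ n)⁻¹})
    (hX : X = Y ∪ (-Y) ∪ {0}) :
    ∀ n : ℕ, 1 ≤ n →
      ((k : ℝ) ^ (n + 1))⁻¹ - ((k : ℝ) ^ (n - 1))⁻¹ ∈ sumset X (k + 1) := by
  intro n hn
  have hK : (1:ℝ) < (k:ℝ) := by exact_mod_cast (by omega : 1 < k)
  refine ⟨fun i => if (i:ℕ) = 0 then vv k (n+1) else -(vv k n), ?_, ?_⟩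
  · intro i
    rw [hX]
    by_cases h : (i:ℕ) = 0
    · left; left
      rw [hY]
      exact ⟨n+1, by omega, by simp [h, vv]⟩
    · left; right
      rw [Set.mem_neg]
      rw [hY]
      exact ⟨n, hn, by simp [h, vv]⟩
  · obtain ⟨m, rfl⟩ : ∃ m, n = m + 1 := ⟨n - 1, by omega⟩
    rw [Fin.sum_univ_succ]
    have h0 : ((0 : Fin (k+1)) : ℕ) = 0 := rfl
    simp only [h0, if_pos rfl, ↓reduceIte]
    have : (∑ i : Fin k, if ((i.succ : Fin (k+1)) : ℕ) = 0 then vv k (m+1+1) else -(vv k (m+1)))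
        = ∑ i : Fin k, -(vv k (m+1)) := by
      refine Finset.sum_congr rfl fun i _ => ?_
      rw [if_neg (by simp [Fin.val_succ])]
    rw [this, Finset.sum_const, Finset.card_univ, Fintype.card_fin]
    have hK0 : (k:ℝ) ≠ 0 := by positivity
    have h1 : (k:ℝ)^(m+1+1) ≠ 0 := by positivity
    have h2 : (k:ℝ)^(m+1) ≠ 0 := by positivity
    have h3 : (k:ℝ)^m ≠ 0 := by positivity
    simp only [vv, nsmul_eq_mul, Nat.add_sub_cancel]
    field_simp
    ring

/-- For `k ≥ 2`, with `Y = {kⁿ + k⁻ⁿ : n ≥ 1}` and `X = Y ∪ (−Y) ∪ {0}`: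
every sum of `k` elements of `X` is zero or has absolute value at least `k − 1`, so the
`k`-fold sumset meets every compact set in a finite set; but the `(k+1)`-fold sumset
contains `k⁻⁽ⁿ⁺¹⁾ − k⁻⁽ⁿ⁻¹⁾` for all `n ≥ 1`, hence `0` is an accumulation point of the
`(k+1)`-fold sumset and the latter is not discrete. -/
theorem sumset_discreteness_fails
    (k : ℕ) (hk : 2 ≤ k)
    (Y : Set ℝ) (hY : Y = {x : ℝ | ∃ n : ℕ, 1 ≤ n ∧ x = (k : ℝ) ^ n + ((k : ℝ) ^ n)⁻¹})
    (X : Set ℝ) (hX : X = Y ∪ (-Y) ∪ {0}) :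
    (∀ s ∈ sumset X k, s = 0 ∨ (k : ℝ) - 1 ≤ |s|) ∧
    (∀ C : Set ℝ, IsCompact C → (C ∩ sumset X k).Finite) ∧
    (∀ n : ℕ, 1 ≤ n →
      ((k : ℝ) ^ (n + 1))⁻¹ - ((k : ℝ) ^ (n - 1))⁻¹ ∈ sumset X (k + 1)) ∧
    AccPt (0 : ℝ) (𝓟 (sumset X (k + 1))) ∧
    ¬ DiscreteTopology ↥(sumset X (k + 1)) := by
  have hK : (1:ℝ) < (k:ℝ) := by exact_mod_cast (by omega : 1 < k)
  have hK0 : (0:ℝ) < (k:ℝ) := by linarith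
  -- Part 1
  have part1 : ∀ s ∈ sumset X k, s = 0 ∨ (k : ℝ) - 1 ≤ |s| := by
    intro s hs
    obtain ⟨N, c, hc, hrep⟩ := rep hY hX k s hs
    rcases gap hk N c hc with h | ⟨M, _, _, _, hb, _⟩
    · left; rw [hrep, h]
    · right; rw [hrep]; exact hb
  -- Part 2
  have part2 : ∀ C : Set ℝ, IsCompact C → (C ∩ sumset X k).Finite := by
    intro C hC
    obtain ⟨R, hR⟩ := hC.isBounded.subset_closedBall 0
    obtain ⟨B, hB⟩ := pow_unbounded_of_one_lt (R + 1) hK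
    set F : (Fin (B+1) → Fin (2*k+1)) → ℝ :=
      fun d => ∑ i : Fin (B+1), ((((d i : ℕ) : ℤ) - (k:ℤ) : ℤ) : ℝ) * vv k (i : ℕ) with hF
    have key : (C ∩ sumset X k) ⊆ {0} ∪ Set.range F := by
      rintro x ⟨hxC, hxS⟩
      obtain ⟨N, c, hc, hrep⟩ := rep hY hX k x hxS
      rcases gap hk N c hc with h | ⟨M, hM1, hMN, heq, _, hb2⟩
      · left; rw [hrep, h]; rfl
      · right
        have hxR : |x| ≤ R := by
          have := hR hxC
          rwa [Metric.mem_closedBall, Real.dist_eq, sub_zero] at this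
        have hMB : M ≤ B := by
          rw [← hrep] at hb2
          have h1 : (k:ℝ)^(M-1) < (k:ℝ)^B := by linarith
          have h2 : M - 1 < B := by
            exact_mod_cast (pow_lt_pow_iff_right₀ hK).1 h1
          omega
        have habs_c : ∀ t, t ∈ Finset.Icc 1 N → |c t| ≤ (k:ℤ) := fun t ht =>
          (Finset.single_le_sum (fun i _ => abs_nonneg (c i)) ht).trans hc
        have hbound : ∀ t, t ∈ Finset.Icc 1 M → -(k:ℤ) ≤ c t ∧ c t ≤ (k:ℤ) := by
          intro t ht
          have := habs_c t (Finset.Icc_subset_Icc_right hMN ht)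
          constructor <;> [linarith [neg_abs_le (c t)]; linarith [le_abs_self (c t)]]
        set d : Fin (B+1) → Fin (2*k+1) := fun i =>
          if h : (i:ℕ) ∈ Finset.Icc 1 M then
            ⟨(c (i:ℕ) + k).toNat, by
              have := hbound (i:ℕ) h
              omega⟩
          else ⟨k, by omega⟩ with hd
        refine ⟨d, ?_⟩
        have hterm : ∀ i : Fin (B+1),
            ((((d i : ℕ) : ℤ) - (k:ℤ) : ℤ) : ℝ) * vv k (i : ℕ)
            = if (i:ℕ) ∈ Finset.Icc 1 M then (c (i:ℕ) : ℝ) * vv k (i:ℕ) else 0 := by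
          intro i
          by_cases h : (i:ℕ) ∈ Finset.Icc 1 M
          · rw [if_pos h]
            have hnn : (0:ℤ) ≤ c (i:ℕ) + k := by
              have := hbound (i:ℕ) h
              omega
            have : (((d i : ℕ) : ℤ) - (k:ℤ)) = c (i:ℕ) := by
              simp only [hd, dif_pos h]
              omega
            rw [this]
          · rw [if_neg h]
            have : (((d i : ℕ) : ℤ) - (k:ℤ)) = 0 := by
              simp only [hd, dif_neg h]
              omega
            rw [this]
            simp
        rw [hF]
        simp only [hterm]
        rw [Fin.sum_univ_eq_sum_range (fun t => if t ∈ Finset.Icc 1 M then (c t : ℝ) * vv k t else 0)]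
        rw [Finset.sum_ite_mem]
        have hinter : Finset.range (B+1) ∩ Finset.Icc 1 M = Finset.Icc 1 M := by
          apply Finset.inter_eq_right.2
          intro t ht
          rw [Finset.mem_range]
          have := (Finset.mem_Icc.1 ht).2
          omega
        rw [hinter, hrep, heq]
    exact ((Set.finite_singleton 0).union (Set.finite_range F)).subset key
  -- Part 3
  have part3 := mem3 hk hY hX
  -- Part 4
  have part4 : AccPt (0 : ℝ) (𝓟 (sumset X (k + 1))) := by
    rw [accPt_iff_nhds]
    intro U hU
    obtain ⟨ε, hε, hball⟩ := Metric.mem_nhds_iff.1 hU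
    obtain ⟨B, hB⟩ := pow_unbounded_of_one_lt ε⁻¹ hK
    set n := B + 1 with hn
    set y := ((k : ℝ) ^ (n + 1))⁻¹ - ((k : ℝ) ^ (n - 1))⁻¹ with hy
    have hyS : y ∈ sumset X (k+1) := part3 n (by omega)
    have hlt : (k:ℝ)^(n-1) < (k:ℝ)^(n+1) := pow_lt_pow_right₀ hK (by omega)
    have hp1 : (0:ℝ) < (k:ℝ)^(n-1) := by positivity
    have hp2 : (0:ℝ) < (k:ℝ)^(n+1) := by positivity
    have hinv : ((k:ℝ)^(n+1))⁻¹ < ((k:ℝ)^(n-1))⁻¹ := by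
      exact inv_strictAnti₀ hp1 hlt
    have hy0 : y ≠ 0 := by
      rw [hy]; intro h; nlinarith
    have hyabs : |y| < ε := by
      have h1 : |y| = ((k:ℝ)^(n-1))⁻¹ - ((k:ℝ)^(n+1))⁻¹ := by
        rw [hy, abs_sub_comm, abs_of_pos (by linarith)]
      have h2 : ((k:ℝ)^(n-1))⁻¹ < ε := by
        have hne : n - 1 = B := by omega
        rw [hne]
        have hεinv : (0:ℝ) < ε⁻¹ := by positivity
        have := inv_strictAnti₀ hεinv hB
        rwa [inv_inv] at this
      have h3 : (0:ℝ) < ((k:ℝ)^(n+1))⁻¹ := by positivity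
      linarith
    refine ⟨y, ⟨hball ?_, hyS⟩, hy0⟩
    rw [Metric.mem_ball, Real.dist_eq, sub_zero]
    exact hyabs
  -- Part 5
  have h0S : (0:ℝ) ∈ sumset X (k+1) := by
    refine ⟨fun _ => 0, fun i => ?_, by simp⟩
    rw [hX]
    right
    rfl
  refine ⟨part1, part2, part3, part4, ?_⟩
  intro hD
  rw [discreteTopology_subtype_iff] at hD
  exact part4.ne (hD 0 h0S)
end

section
/- Let (G, H, Γ) be a cut-and-project scheme with W₀ ⊆ H a compact neighbourhood of the identity, and let P₀ = π_G((G × W₀) ∩ Γ). If Γ is a uniform (cocompact) lattice in G × H, then P₀ is relatively dense in G: there exists a compact set K ⊆ G with P₀·K = G. -/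
open scoped Pointwise
open Topology MeasureTheory

/-- A lattice in a locally compact group: a discrete subgroup admitting a measurable
fundamental domain of finite Haar measure. -/
def IsLatticeSubgroup {G : Type*} [Group G] [TopologicalSpace G] [MeasurableSpace G]
    (Γ : Subgroup G) : Prop :=
  DiscreteTopology ↥Γ ∧
    ∃ μ : Measure G, μ.IsHaarMeasure ∧
      ∃ D : Set G, MeasurableSet D ∧ μ D ≠ ⊤ ∧ ∀ x : G, ∃! γ : Γ, (γ : G) * x ∈ D

/-- A cut-and-project scheme `(G, H, Γ)`: `Γ` is a lattice in `G × H`, the projection to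
`G` is injective on `Γ` and the projection of `Γ` to `H` is dense. -/
def IsCutAndProjectScheme {G H : Type*} [Group G] [Group H]
    [TopologicalSpace G] [TopologicalSpace H] [MeasurableSpace G] [MeasurableSpace H]
    (Γ : Subgroup (G × H)) : Prop :=
  IsLatticeSubgroup Γ ∧ Set.InjOn Prod.fst (Γ : Set (G × H)) ∧
    Dense (Prod.snd '' (Γ : Set (G × H)))

/-! Write `(g, 1) = γ k` with `γ ∈ Γ` and `k` in a compact set `K` with `Γ K = G × H`. Then
`π_H(γ)` lies in the compact set `π_H(K)⁻¹`, which by density of `π_H(Γ)` is covered by finitely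
many translates `int(W₀) π_H(δ)`, `δ ∈ F ⊆ Γ`. Correcting `γ` by the appropriate `δ⁻¹` gives a
point of the model set, and `g ∈ P₀ · π_G(F) π_G(K)`. -/

open Set

theorem IsCompact.exists_finite_subset_subset_mul_image {G ι : Type*} [Group G]
    [TopologicalSpace G] [IsTopologicalGroup G] {C U : Set G} {T : Set ι} {f : ι → G}
    (hC : IsCompact C) (hU : IsOpen U) (hUne : U.Nonempty) (hT : Dense (f '' T)) :
    ∃ F ⊆ T, F.Finite ∧ C ⊆ U * f '' F := by
  have hcover : C ⊆ ⋃ i ∈ T, (· * f i) '' U := by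
    rw [← biUnion_image (g := fun a => (· * a) '' U), iUnion_mul_right_image,
      ← hU.mul_closure, hT.closure_eq, mul_univ hUne]
    exact subset_univ C
  obtain ⟨F, hFT, hF, hCF⟩ :=
    hC.elim_finite_subcover_image (fun i _ => isOpenMap_mul_right (f i) U hU) hcover
  refine ⟨F, hFT, hF, ?_⟩
  rwa [← iUnion_mul_right_image, biUnion_image]

section ModelSet

variable {G H : Type*} [Group G] [Group H]

def modelSet (Γ : Subgroup (G × H)) (W : Set H) : Set G :=
  Prod.fst '' ((univ ×ˢ W) ∩ Γ)

theorem modelSet_mul_eq_univ {Γ : Subgroup (G × H)} {K F : Set (G × H)} {W : Set H}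
    (hK : (Γ : Set (G × H)) * K = univ) (hFΓ : F ⊆ Γ)
    (hF : (Prod.snd '' K)⁻¹ ⊆ W * Prod.snd '' F) :
    modelSet Γ W * (Prod.fst '' F * Prod.fst '' K) = univ := by
  refine eq_univ_of_forall fun g => ?_
  obtain ⟨γ, hγ, k, hk, hγk⟩ : ((g, 1) : G × H) ∈ (Γ : Set (G × H)) * K := hK ▸ mem_univ _
  have hγk₂ : γ.2 = k.2⁻¹ := eq_inv_of_mul_eq_one_left (congrArg Prod.snd hγk)
  have hγK : γ.2 ∈ (Prod.snd '' K)⁻¹ := ⟨k, hk, by rw [hγk₂, inv_inv]⟩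
  obtain ⟨w, hw, _, ⟨δ, hδF, rfl⟩, hwδ⟩ := hF hγK
  refine ⟨(γ * δ⁻¹).1, ⟨γ * δ⁻¹, ⟨⟨mem_univ _, ?_⟩, mul_mem hγ (inv_mem (hFΓ hδF))⟩, rfl⟩,
    δ.1 * k.1, mul_mem_mul (mem_image_of_mem _ hδF) (mem_image_of_mem _ hk), ?_⟩
  · simpa only [Prod.snd_mul, Prod.snd_inv, ← hwδ, mul_inv_cancel_right] using hw
  · have hγk₁ : γ.1 * k.1 = g := congrArg Prod.fst hγk
    simp only [Prod.fst_mul, Prod.fst_inv, mul_assoc, inv_mul_cancel_left, hγk₁]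

end ModelSet

theorem modelSet_relativelyDense_of_uniform_general
    {G H : Type*} [Group G] [Group H] [TopologicalSpace G] [TopologicalSpace H]
    [IsTopologicalGroup G] [IsTopologicalGroup H]
    [MeasurableSpace G] [MeasurableSpace H]
    (Γ : Subgroup (G × H)) (hΓ : IsCutAndProjectScheme Γ)
    (W₀ : Set H) (hW₀n : W₀ ∈ 𝓝 (1 : H))
    (huniform : ∃ K : Set (G × H), IsCompact K ∧ (Γ : Set (G × H)) * K = Set.univ) :
    ∃ K : Set G, IsCompact K ∧
      (Prod.fst '' ((Set.univ ×ˢ W₀) ∩ (Γ : Set (G × H)))) * K = Set.univ := by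
  obtain ⟨K, hKc, hK⟩ := huniform
  obtain ⟨F, hFΓ, hFfin, hF⟩ :=
    (hKc.image continuous_snd).inv.exists_finite_subset_subset_mul_image isOpen_interior
      ⟨1, mem_interior_iff_mem_nhds.2 hW₀n⟩ hΓ.2.2
  exact ⟨Prod.fst '' F * Prod.fst '' K, (hFfin.image _).isCompact.mul (hKc.image continuous_fst),
    modelSet_mul_eq_univ hK hFΓ (hF.trans (mul_subset_mul interior_subset subset_rfl))⟩

/-- If `(G,H,Γ)` is a cut-and-project scheme, `W₀` a compact
neighbourhood of the identity in `H`, and `Γ` is cocompact in `G × H`, then the model set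
`P₀ = π_G((G × W₀) ∩ Γ)` is relatively dense in `G`. -/
theorem modelSet_relativelyDense_of_uniform
    {G H : Type*} [Group G] [Group H] [TopologicalSpace G] [TopologicalSpace H]
    [IsTopologicalGroup G] [IsTopologicalGroup H]
    [LocallyCompactSpace G] [LocallyCompactSpace H]
    [MeasurableSpace G] [MeasurableSpace H]
    (Γ : Subgroup (G × H)) (hΓ : IsCutAndProjectScheme Γ)
    (W₀ : Set H) (hW₀c : IsCompact W₀) (hW₀n : W₀ ∈ 𝓝 (1 : H))
    (huniform : ∃ K : Set (G × H), IsCompact K ∧ (Γ : Set (G × H)) * K = Set.univ) :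
    ∃ K : Set G, IsCompact K ∧
      (Prod.fst '' ((Set.univ ×ˢ W₀) ∩ (Γ : Set (G × H)))) * K = Set.univ :=
  modelSet_relativelyDense_of_uniform_general Γ hΓ W₀ hW₀n huniform
end

section
/- Let (G, H, Γ) be a cut-and-project scheme with W₀ ⊆ H a compact neighbourhood of the identity. If the model set P₀ = π_G((G × W₀) ∩ Γ) is relatively dense in G, then Γ is a uniform lattice in G × H, i.e., (G×H)/Γ is compact. -/
open scoped Pointwise
open Topology MeasureTheory

theorem Dense.mul_eq_univ_of_mem_nhds_one {H : Type*} [Group H] [TopologicalSpace H]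
    [IsTopologicalGroup H] {S W : Set H} (hS : Dense S) (hW : W ∈ 𝓝 (1 : H)) :
    S * W = Set.univ := by
  refine Set.eq_univ_of_forall fun h => ?_
  have hnhds : (fun x => x⁻¹ * h) ⁻¹' W ∈ 𝓝 h :=
    (continuous_inv.mul continuous_const).continuousAt.preimage_mem_nhds (by simpa using hW)
  obtain ⟨a, haS, haW⟩ := hS.inter_nhds_nonempty hnhds
  exact ⟨a, haS, a⁻¹ * h, haW, mul_inv_cancel_left a h⟩

/-- Move the `H`-coordinate into `W` by some `γ₁ ∈ Γ`, then correct the `G`-coordinate by a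
point `γ₂` of the model set; the `H`-coordinate of `γ₂` is absorbed by `W⁻¹`. -/
theorem Subgroup.coe_mul_prod_inv_mul_eq_univ {G H : Type*} [Group G] [Group H]
    (Γ : Subgroup (G × H)) {K : Set G} {W : Set H}
    (hH : Prod.snd '' (Γ : Set (G × H)) * W = Set.univ)
    (hG : Prod.fst '' ((Set.univ ×ˢ W) ∩ (Γ : Set (G × H))) * K = Set.univ) :
    (Γ : Set (G × H)) * (K ×ˢ (W⁻¹ * W)) = Set.univ := by
  refine Set.eq_univ_of_forall fun ⟨g, h⟩ => ?_
  obtain ⟨_, ⟨γ₁, hγ₁, rfl⟩, v, hv, hh⟩ := hH.ge (Set.mem_univ h)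
  obtain ⟨_, ⟨γ₂, ⟨⟨-, hγ₂W⟩, hγ₂⟩, rfl⟩, k, hk, hg⟩ := hG.ge (Set.mem_univ (γ₁.1⁻¹ * g))
  refine ⟨γ₁ * γ₂, Γ.mul_mem hγ₁ hγ₂, (k, γ₂.2⁻¹ * v),
    ⟨hk, Set.mul_mem_mul (Set.inv_mem_inv.2 hγ₂W) hv⟩, ?_⟩
  ext
  · simp only [Prod.fst_mul, mul_assoc, hg, mul_inv_cancel_left]
  · simp only [Prod.snd_mul, mul_assoc, mul_inv_cancel_left, hh]

theorem uniform_of_modelSet_relativelyDense_general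
    {G H : Type*} [Group G] [Group H] [TopologicalSpace G] [TopologicalSpace H]
    [IsTopologicalGroup H]
    [MeasurableSpace G] [MeasurableSpace H]
    (Γ : Subgroup (G × H)) (hΓ : IsCutAndProjectScheme Γ)
    (W₀ : Set H) (hW₀c : IsCompact W₀) (hW₀n : W₀ ∈ 𝓝 (1 : H))
    (hdense : ∃ K : Set G, IsCompact K ∧
      (Prod.fst '' ((Set.univ ×ˢ W₀) ∩ (Γ : Set (G × H)))) * K = Set.univ) :
    ∃ K : Set (G × H), IsCompact K ∧ (Γ : Set (G × H)) * K = Set.univ := by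
  obtain ⟨K₀, hK₀c, hK₀⟩ := hdense
  have hH : Prod.snd '' (Γ : Set (G × H)) * W₀ = Set.univ :=
    hΓ.2.2.mul_eq_univ_of_mem_nhds_one hW₀n
  exact ⟨K₀ ×ˢ (W₀⁻¹ * W₀), hK₀c.prod (hW₀c.inv.mul hW₀c),
    Γ.coe_mul_prod_inv_mul_eq_univ hH hK₀⟩

/-- If `(G,H,Γ)` is a cut-and-project scheme, `W₀` a compact
neighbourhood of the identity in `H`, and the model set `P₀ = π_G((G × W₀) ∩ Γ)` is
relatively dense in `G`, then `Γ` is a uniform (cocompact) lattice in `G × H`. -/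
theorem uniform_of_modelSet_relativelyDense
    {G H : Type*} [Group G] [Group H] [TopologicalSpace G] [TopologicalSpace H]
    [IsTopologicalGroup G] [IsTopologicalGroup H]
    [LocallyCompactSpace G] [LocallyCompactSpace H]
    [MeasurableSpace G] [MeasurableSpace H]
    (Γ : Subgroup (G × H)) (hΓ : IsCutAndProjectScheme Γ)
    (W₀ : Set H) (hW₀c : IsCompact W₀) (hW₀n : W₀ ∈ 𝓝 (1 : H))
    (hdense : ∃ K : Set G, IsCompact K ∧
      (Prod.fst '' ((Set.univ ×ˢ W₀) ∩ (Γ : Set (G × H)))) * K = Set.univ) :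
    ∃ K : Set (G × H), IsCompact K ∧ (Γ : Set (G × H)) * K = Set.univ :=
  uniform_of_modelSet_relativelyDense_general Γ hΓ W₀ hW₀c hW₀n hdense
end

section
/- Let G, N be simply connected nilpotent Lie groups and Λ ⊆ G a relatively dense subset with K·Λ = G for some compact K. If f, g : G → N are continuous homomorphisms such that λ ↦ f(λ)g(λ)⁻¹ is bounded on Λ, then the map x ↦ f(x)g(x)⁻¹ is bounded on all of G. -/
open scoped Pointwise
open Topology

/-- A simply connected nilpotent (finite-dimensional real) Lie group, bundled. -/
structure SCNilpotentLieGroup : Type 1 where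
  /-- the model vector space -/
  E : Type
  /-- the underlying set of the group -/
  carrier : Type
  [nacg : NormedAddCommGroup E]
  [ns : NormedSpace ℝ E]
  [fd : FiniteDimensional ℝ E]
  [ts : TopologicalSpace carrier]
  [cs : ChartedSpace E carrier]
  [grp : Group carrier]
  [lie : LieGroup (modelWithCornersSelf ℝ E) (⊤ : ℕ∞) carrier]
  [sc : SimplyConnectedSpace carrier]
  [nil : Group.IsNilpotent carrier]

attribute [instance] SCNilpotentLieGroup.nacg SCNilpotentLieGroup.ns SCNilpotentLieGroup.fd
  SCNilpotentLieGroup.ts SCNilpotentLieGroup.cs SCNilpotentLieGroup.grp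
  SCNilpotentLieGroup.lie SCNilpotentLieGroup.sc SCNilpotentLieGroup.nil

/-!
Writing `x = k λ` with `k ∈ K` and `λ ∈ Λ`, the homomorphism property gives
`f(x) g(x)⁻¹ = f(k) (f(λ) g(λ)⁻¹) g(k)⁻¹`, so `f(x) g(x)⁻¹` lies in the compact set
`f(K) · C · g(K)⁻¹`.
-/

namespace MonoidHom

variable {G H : Type*} [Monoid G] [Group H]

theorem mul_inv_apply_mul (f g : G →* H) (k l : G) :
    f (k * l) * (g (k * l))⁻¹ = f k * (f l * (g l)⁻¹) * (g k)⁻¹ := by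
  simp only [map_mul, mul_inv_rev, mul_assoc]

theorem mul_inv_apply_mem_of_mem_mul (f g : G →* H) {K Λ : Set G} {C : Set H}
    (hC : ∀ l ∈ Λ, f l * (g l)⁻¹ ∈ C) {x : G} (hx : x ∈ K * Λ) :
    f x * (g x)⁻¹ ∈ f '' K * C * (g '' K)⁻¹ := by
  obtain ⟨k, hk, l, hl, rfl⟩ := hx
  rw [mul_inv_apply_mul]
  exact Set.mul_mem_mul (Set.mul_mem_mul (Set.mem_image_of_mem f hk) (hC l hl))
    (Set.inv_mem_inv.mpr (Set.mem_image_of_mem g hk))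

theorem exists_isCompact_mul_inv_apply_mem [TopologicalSpace G] [TopologicalSpace H]
    [IsTopologicalGroup H] (f g : G →* H) (hf : Continuous f) (hg : Continuous g)
    {K Λ : Set G} (hK : IsCompact K) (hKΛ : K * Λ = Set.univ) {C : Set H} (hC : IsCompact C)
    (hΛC : ∀ l ∈ Λ, f l * (g l)⁻¹ ∈ C) :
    ∃ C' : Set H, IsCompact C' ∧ ∀ x, f x * (g x)⁻¹ ∈ C' :=
  ⟨f '' K * C * (g '' K)⁻¹, ((hK.image hf).mul hC).mul (hK.image hg).inv,
    fun x => mul_inv_apply_mem_of_mem_mul f g hΛC (hKΛ ▸ Set.mem_univ x)⟩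

end MonoidHom

/-- Let `G, N` be simply connected nilpotent Lie groups and `Λ ⊆ G`
relatively dense (`K·Λ = G` for some compact `K`). If `f, g : G → N` are continuous
homomorphisms with `λ ↦ f(λ)g(λ)⁻¹` bounded on `Λ`, then `x ↦ f(x)g(x)⁻¹` is bounded on
all of `G`. -/
theorem boundedDistance_of_boundedDistance_on_relativelyDense
    (S T : SCNilpotentLieGroup) (Λ : Set S.carrier)
    (hΛ : ∃ K : Set S.carrier, IsCompact K ∧ K * Λ = Set.univ)
    (f g : S.carrier →* T.carrier) (hf : Continuous f) (hg : Continuous g)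
    (hb : ∃ C : Set T.carrier, IsCompact C ∧ ∀ x ∈ Λ, f x * (g x)⁻¹ ∈ C) :
    ∃ C : Set T.carrier, IsCompact C ∧ ∀ x : S.carrier, f x * (g x)⁻¹ ∈ C := by
  have : IsTopologicalGroup T.carrier :=
    topologicalGroup_of_lieGroup (modelWithCornersSelf ℝ T.E) (⊤ : ℕ∞)
  obtain ⟨K, hK, hKΛ⟩ := hΛ
  obtain ⟨C, hC, hΛC⟩ := hb
  exact f.exists_isCompact_mul_inv_apply_mem g hf hg hK hKΛ hC hΛC
end

section
/- Let p : G → B be a covering homomorphism of locally compact groups (a surjective continuous open group homomorphism with discrete kernel that is a local homeomorphism), and let Λ ⊆ B be a uniform approximate lattice. Then p⁻¹(Λ) is a uniform approximate lattice in G. -/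
open scoped Pointwise
open Topology

/-- A uniform approximate lattice: a symmetric subset containing the identity that is an
approximate subgroup, relatively dense and uniformly discrete. -/
def IsUniformApproxLattice {G : Type*} [Group G] [TopologicalSpace G] (Λ : Set G) : Prop :=
  Λ⁻¹ = Λ ∧ (1 : G) ∈ Λ ∧
    (∃ F : Set G, F.Finite ∧ Λ * Λ ⊆ F * Λ) ∧
    (∃ K : Set G, IsCompact K ∧ Λ * K = Set.univ) ∧
    (∃ V : Set G, IsCompact V ∧ V ∈ 𝓝 (1 : G) ∧ ∀ g : G, (g • V ∩ Λ).Subsingleton)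

/-!
Symmetry, the approximate-subgroup property and relative density pass to `p⁻¹(Λ)` because `p` is
surjective: a finite `F` lifts along a set-theoretic section of `p`, and a compact `K ⊆ B` lifts
to a compact subset of `G` because the local homeomorphism `p` is open and `G` is locally compact.
For uniform discreteness, `p` is injective on a compact neighbourhood `W` of `1` with `p(W) ⊆ V`,
hence on every translate `g • W`, which `p` therefore maps injectively into the subsingleton
`p(g) • V ∩ Λ`.
-/

open Set

theorem IsOpenMap.exists_isCompact_image_superset {X Y : Type*} [TopologicalSpace X]
    [LocallyCompactSpace X] [TopologicalSpace Y] {f : X → Y} (hf : IsOpenMap f) {K : Set Y}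
    (hK : IsCompact K) (hKf : K ⊆ range f) : ∃ C : Set X, IsCompact C ∧ K ⊆ f '' C := by
  choose x hx using fun y : K ↦ hKf y.2
  choose C hC hCx using fun y : K ↦ exists_compact_mem_nhds (x y)
  obtain ⟨t, hKt⟩ := hK.elim_nhds_subcover' (fun y hy ↦ f '' interior (C ⟨y, hy⟩))
    fun y hy ↦ (hf _ isOpen_interior).mem_nhds
      ⟨x ⟨y, hy⟩, mem_interior_iff_mem_nhds.2 (hCx _), hx _⟩
  refine ⟨⋃ y ∈ t, C y, t.isCompact_biUnion fun y _ ↦ hC y, hKt.trans ?_⟩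
  exact iUnion₂_subset fun y hy ↦
    image_mono (interior_subset.trans (subset_biUnion_of_mem (u := C) hy))

namespace MonoidHom

variable {G B : Type*} [Group G] [Group B]

theorem preimage_inv (p : G →* B) (s : Set B) : (p ⁻¹' s)⁻¹ = p ⁻¹' s⁻¹ := by
  ext
  simp

theorem preimage_mul_subset_image_mul_preimage (p : G →* B) {σ : B → G}
    (hσ : Function.RightInverse σ p) (s t : Set B) : p ⁻¹' (s * t) ⊆ σ '' s * p ⁻¹' t := by
  rintro g ⟨a, ha, b, hb, hab⟩
  refine ⟨σ a, mem_image_of_mem σ ha, (σ a)⁻¹ * g, ?_, mul_inv_cancel_left _ _⟩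
  simpa [hσ a, ← hab] using hb

theorem preimage_mul_eq_univ (p : G →* B) {s K : Set B} {C : Set G} (hsK : s * K = univ)
    (hKC : K ⊆ p '' C) : p ⁻¹' s * C = univ := by
  refine eq_univ_of_forall fun g ↦ ?_
  obtain ⟨a, ha, k, hk, hak⟩ : p g ∈ s * K := hsK ▸ mem_univ _
  obtain ⟨c, hc, rfl⟩ := hKC hk
  refine ⟨g * c⁻¹, ?_, c, hc, inv_mul_cancel_right g c⟩
  simpa [← hak] using ha

theorem injOn_smul (p : G →* B) {W : Set G} (hW : InjOn p W) (g : G) : InjOn p (g • W) := by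
  rintro _ ⟨v, hv, rfl⟩ _ ⟨w, hw, rfl⟩ hvw
  simp only [smul_eq_mul, map_mul, mul_right_inj] at hvw
  rw [hW hv hw hvw]

theorem subsingleton_smul_inter_preimage (p : G →* B) {W : Set G} {V Λ : Set B}
    (hW : InjOn p W) (hWV : W ⊆ p ⁻¹' V) (hVΛ : ∀ b : B, (b • V ∩ Λ).Subsingleton) (g : G) :
    (g • W ∩ p ⁻¹' Λ).Subsingleton := by
  have hmaps : MapsTo p (g • W ∩ p ⁻¹' Λ) (p g • V ∩ Λ) := by
    rintro _ ⟨⟨w, hw, rfl⟩, hΛ⟩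
    exact ⟨⟨p w, hWV hw, (map_mul p g w).symm⟩, hΛ⟩
  intro x hx y hy
  exact p.injOn_smul hW g hx.1 hy.1 (hVΛ (p g) (hmaps hx) (hmaps hy))

end MonoidHom

theorem preimage_uniformApproxLattice_of_covering_general
    {G B : Type*} [Group G] [TopologicalSpace G] [LocallyCompactSpace G]
    [Group B] [TopologicalSpace B]
    (p : G →* B) (hs : Function.Surjective p) (hl : IsLocalHomeomorph p)
    (Λ : Set B) (hΛ : IsUniformApproxLattice Λ) :
    IsUniformApproxLattice (p ⁻¹' Λ) := by
  obtain ⟨hsymm, hone, ⟨F, hF, hFΛ⟩, ⟨K, hK, hKΛ⟩, ⟨V, -, hV, hVΛ⟩⟩ := hΛ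
  refine ⟨by rw [p.preimage_inv, hsymm], by simpa using hone, ?_, ?_, ?_⟩
  · refine ⟨Function.surjInv hs '' F, hF.image _, ?_⟩
    calc p ⁻¹' Λ * p ⁻¹' Λ ⊆ p ⁻¹' (Λ * Λ) := preimage_mul_preimage_subset p
      _ ⊆ p ⁻¹' (F * Λ) := preimage_mono hFΛ
      _ ⊆ Function.surjInv hs '' F * p ⁻¹' Λ :=
        p.preimage_mul_subset_image_mul_preimage (Function.rightInverse_surjInv hs) F Λ
  · obtain ⟨C, hC, hKC⟩ :=
      hl.isOpenMap.exists_isCompact_image_superset hK (hs.range_eq ▸ subset_univ K)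
    exact ⟨C, hC, p.preimage_mul_eq_univ hKΛ hKC⟩
  · obtain ⟨U, hU, hinj⟩ := isLocallyInjective_iff_nhds.1 hl.isLocallyInjective 1
    have hpV : p ⁻¹' V ∈ 𝓝 (1 : G) :=
      hl.continuous.continuousAt.preimage_mem_nhds (by simpa using hV)
    obtain ⟨W, hW, hWUV, hWc⟩ := local_compact_nhds (Filter.inter_mem hU hpV)
    exact ⟨W, hWc, hW, p.subsingleton_smul_inter_preimage (hinj.mono fun _ h ↦ (hWUV h).1)
      (fun _ h ↦ (hWUV h).2) hVΛ⟩

/-- Let `p : G → B` be a covering homomorphism of locally compact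
groups (a surjective continuous open homomorphism with discrete kernel that is a local
homeomorphism) and `Λ ⊆ B` a uniform approximate lattice. Then `p⁻¹(Λ)` is a uniform
approximate lattice in `G`. -/
theorem preimage_uniformApproxLattice_of_covering
    {G B : Type*} [Group G] [TopologicalSpace G] [IsTopologicalGroup G] [LocallyCompactSpace G]
    [Group B] [TopologicalSpace B] [IsTopologicalGroup B] [LocallyCompactSpace B]
    (p : G →* B) (hc : Continuous p) (hs : Function.Surjective p) (ho : IsOpenMap p)
    (hk : DiscreteTopology ↥p.ker) (hl : IsLocalHomeomorph p)
    (Λ : Set B) (hΛ : IsUniformApproxLattice Λ) :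
    IsUniformApproxLattice (p ⁻¹' Λ) :=
  preimage_uniformApproxLattice_of_covering_general p hs hl Λ hΛ
end

section
/- Let K be a field, and let 𝔤 be a finite-dimensional Lie algebra over K. Then there exist indecomposable Lie ideals I₁, …, I_r of 𝔤 such that 𝔤 = I₁ ⊕ ⋯ ⊕ I_r as a direct sum of Lie algebras. Moreover, if 𝔤 = J₁ ⊕ ⋯ ⊕ J_s is another such decomposition into indecomposable ideals, then r = s and there is a permutation σ of {1,…,r} such that I_i ≅ J_{σ(i)} as K-Lie algebras for all i. -/
open Submodule LinearMap

/-- A Lie algebra is indecomposable if it is non-trivial and cannot be written as the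
direct sum of two non-trivial ideals. -/
def IsIndecomposableLieAlgebra (K L : Type*) [CommRing K] [LieRing L] [LieAlgebra K L] :
    Prop :=
  Nontrivial L ∧ ∀ I J : LieIdeal K L, I ⊓ J = ⊥ → I ⊔ J = ⊤ → I = ⊥ ∨ J = ⊥

section Infra
variable {K 𝔤 : Type*} [Field K] [LieRing 𝔤] [LieAlgebra K 𝔤]

/-- Indecomposability of an ideal, phrased via ideals of the ambient algebra. -/
def ModIndec (N : LieIdeal K 𝔤) : Prop :=
  Nontrivial N ∧ ∀ A B : LieIdeal K 𝔤, A ⊓ B = ⊥ → A ⊔ B = N → A = ⊥ ∨ B = ⊥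

lemma disjoint_aux {α : Type*} [Lattice α] [OrderBot α] [IsModularLattice α]
    {X Y A B : α} (hXA : X ≤ A) (hYA : Y ≤ A) (hXY : Disjoint X Y) (hAB : Disjoint A B) :
    Disjoint X (Y ⊔ B) := by
  have h1 : (Y ⊔ B) ⊓ A = Y := by
    rw [sup_inf_assoc_of_le _ hYA, disjoint_iff.mp hAB.symm, sup_bot_eq]
  rw [disjoint_iff]
  have h2 : X ⊓ (Y ⊔ B) = X ⊓ ((Y ⊔ B) ⊓ A) := by
    rw [inf_comm (Y ⊔ B) A, ← inf_assoc, inf_eq_left.mpr hXA]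
  rw [h2, h1, disjoint_iff.mp hXY]

lemma lie_mem_left' (A : LieIdeal K 𝔤) {a : 𝔤} (x : 𝔤) (h : a ∈ A) : ⁅a, x⁆ ∈ A := by
  rw [← lie_skew]; exact neg_mem (A.lie_mem h)

lemma lie_eq_zero_of_disjoint {A B : LieIdeal K 𝔤}
    (h : Disjoint (A : Submodule K 𝔤) (B : Submodule K 𝔤)) {a b : 𝔤}
    (ha : a ∈ A) (hb : b ∈ B) : ⁅a, b⁆ = 0 := by
  have h1 : ⁅a, b⁆ ∈ (A : Submodule K 𝔤) := lie_mem_left' A b ha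
  have h2 : ⁅a, b⁆ ∈ (B : Submodule K 𝔤) := B.lie_mem hb
  simpa using h.le_bot (Submodule.mem_inf.mpr ⟨h1, h2⟩)

lemma coe_bot' : ((⊥ : LieIdeal K 𝔤) : Submodule K 𝔤) = ⊥ := rfl

lemma coe_top' : ((⊤ : LieIdeal K 𝔤) : Submodule K 𝔤) = ⊤ := rfl

lemma coe_sup' (A B : LieIdeal K 𝔤) :
    ((A ⊔ B : LieIdeal K 𝔤) : Submodule K 𝔤) = (A : Submodule K 𝔤) ⊔ (B : Submodule K 𝔤) :=
  by exact LieSubmodule.sup_toSubmodule A B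

lemma coe_inf' (A B : LieIdeal K 𝔤) :
    ((A ⊓ B : LieIdeal K 𝔤) : Submodule K 𝔤) = (A : Submodule K 𝔤) ⊓ (B : Submodule K 𝔤) :=
  by exact LieSubmodule.inf_toSubmodule A B

lemma coe_iSup' {ι : Sort*} (p : ι → LieIdeal K 𝔤) :
    ((⨆ i, p i : LieIdeal K 𝔤) : Submodule K 𝔤) = ⨆ i, (p i : Submodule K 𝔤) :=
  by exact LieSubmodule.iSup_toSubmodule p

lemma coe_eq_iff' (A B : LieIdeal K 𝔤) :
    (A : Submodule K 𝔤) = (B : Submodule K 𝔤) ↔ A = B :=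
  by exact LieSubmodule.toSubmodule_inj A B

lemma coe_le_iff' (A B : LieIdeal K 𝔤) :
    (A : Submodule K 𝔤) ≤ (B : Submodule K 𝔤) ↔ A ≤ B := Iff.rfl

section Proj
variable (A B : LieIdeal K 𝔤) (hc : IsCompl (A : Submodule K 𝔤) (B : Submodule K 𝔤))

/-- The projection onto an ideal along a complementary ideal. -/
noncomputable def lprj : 𝔤 →ₗ[K] ↥A :=
  Submodule.linearProjOfIsCompl (A : Submodule K 𝔤) (B : Submodule K 𝔤) hc

variable {A B}

lemma lprj_apply_left {a : 𝔤} (ha : a ∈ A) : lprj A B hc a = ⟨a, ha⟩ :=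
  Submodule.linearProjOfIsCompl_apply_left hc ⟨a, ha⟩

lemma lprj_apply_right {b : 𝔤} (hb : b ∈ B) : lprj A B hc b = 0 :=
  Submodule.projectionOnto_apply_of_mem_right hc hb

lemma lprj_eq_zero_iff {y : 𝔤} : lprj A B hc y = 0 ↔ y ∈ B :=
  Submodule.linearProjOfIsCompl_apply_eq_zero_iff hc

lemma lprj_sub_mem (y : 𝔤) : y - ↑(lprj A B hc y) ∈ B := by
  have h := Submodule.projection_add_projection_eq_self hc y
  have h2 : y - ↑(lprj A B hc y) =
      ↑(Submodule.linearProjOfIsCompl (B : Submodule K 𝔤) (A : Submodule K 𝔤) hc.symm y) :=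
    sub_eq_of_eq_add' h.symm
  rw [h2]
  exact (Submodule.linearProjOfIsCompl (B : Submodule K 𝔤) _ hc.symm y).2

lemma lprj_eq_of {a b y : 𝔤} (ha : a ∈ A) (hb : b ∈ B) (hy : y = a + b) :
    (↑(lprj A B hc y) : 𝔤) = a := by
  subst hy
  rw [map_add, lprj_apply_left hc ha, lprj_apply_right hc hb, add_zero]

lemma lprj_lie (x y : 𝔤) : (↑(lprj A B hc ⁅x, y⁆) : 𝔤) = ⁅x, ↑(lprj A B hc y)⁆ := by
  refine lprj_eq_of hc (a := ⁅x, (↑(lprj A B hc y) : 𝔤)⁆) (b := ⁅x, y - ↑(lprj A B hc y)⁆)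
    (A.lie_mem (lprj A B hc y).2) (B.lie_mem (lprj_sub_mem hc y)) ?_
  rw [← lie_add]
  congr 1
  abel

lemma lprj_bracket (y z : 𝔤) :
    (↑(lprj A B hc ⁅y, z⁆) : 𝔤) = ⁅(↑(lprj A B hc y) : 𝔤), (↑(lprj A B hc z) : 𝔤)⁆ := by
  have step1 : (↑(lprj A B hc ⁅y, z⁆) : 𝔤) = ⁅(↑(lprj A B hc y) : 𝔤), z⁆ := by
    refine lprj_eq_of hc (a := ⁅(↑(lprj A B hc y) : 𝔤), z⁆) (b := ⁅y - ↑(lprj A B hc y), z⁆)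
      (lie_mem_left' A z (lprj A B hc y).2)
      (lie_mem_left' B z (lprj_sub_mem hc y)) ?_
    rw [← add_lie]
    congr 1
    abel
  have step2 : ⁅(↑(lprj A B hc y) : 𝔤), z⁆
      = ⁅(↑(lprj A B hc y) : 𝔤), (↑(lprj A B hc z) : 𝔤)⁆ := by
    conv_lhs => rw [show z = ↑(lprj A B hc z) + (z - ↑(lprj A B hc z)) by abel]
    rw [lie_add, lie_eq_zero_of_disjoint hc.disjoint (lprj A B hc y).2
      (lprj_sub_mem hc z), add_zero]
  rw [step1, step2]

end Proj

/-- The algebra of `𝔤`-equivariant linear endomorphisms of an ideal. -/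
def adEnd (A : LieIdeal K 𝔤) : Subalgebra K (Module.End K ↥A) where
  carrier := {f | ∀ (x : 𝔤) (a : ↥A), f ⁅x, a⁆ = ⁅x, f a⁆}
  mul_mem' := by
    intro f g hf hg x a
    rw [Module.End.mul_apply, Module.End.mul_apply, hg x a, hf x _]
  add_mem' := by
    intro f g hf hg x a
    rw [LinearMap.add_apply, LinearMap.add_apply, hf x a, hg x a, lie_add]
  algebraMap_mem' := by
    intro r x a
    simp [Module.algebraMap_end_apply, lie_smul]

lemma pow_mem_adEnd (A : LieIdeal K 𝔤) (g : adEnd (K := K) A) (n : ℕ) :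
    ((g : Module.End K ↥A) ^ n) ∈ adEnd (K := K) A := by
  simpa using (pow_mem g.2 n : (g:Module.End K ↥A)^n ∈ adEnd (K := K) A)

/-- In a ring where each element is a unit or nilpotent, a unit sum has a unit term. -/
lemma not_isUnit_add {R : Type*} [Ring R]
    (hdich : ∀ x : R, IsUnit x ∨ IsNilpotent x) {x y : R}
    (hx : ¬ IsUnit x) (hy : ¬ IsUnit y) : ¬ IsUnit (x + y) := by
  intro hu
  obtain ⟨u, hu'⟩ := hu
  set v : R := ↑u⁻¹ with hv
  have hux : x = ↑u * (v * x) := by rw [← mul_assoc, hv, Units.mul_inv, one_mul]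
  have huy : y = ↑u * (v * y) := by rw [← mul_assoc, hv, Units.mul_inv, one_mul]
  have hvx : ¬ IsUnit (v * x) := fun h => hx (hux ▸ (u.isUnit.mul h))
  have hvy : ¬ IsUnit (v * y) := fun h => hy (huy ▸ (u.isUnit.mul h))
  have hnil : IsNilpotent (v * x) := (hdich _).resolve_left hvx
  have hone : v * x + v * y = 1 := by rw [← mul_add, ← hu', hv, Units.inv_mul]
  have : v * y = 1 - v * x := by rw [← hone]; abel
  exact hvy (this ▸ hnil.isUnit_one_sub)

lemma exists_isUnit_of_isUnit_sum {R : Type*} [Ring R] [Nontrivial R]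
    (hdich : ∀ x : R, IsUnit x ∨ IsNilpotent x) {ι : Type*} (t : Finset ι) (f : ι → R)
    (hu : IsUnit (∑ i ∈ t, f i)) : ∃ i ∈ t, IsUnit (f i) := by
  classical
  induction t using Finset.induction_on with
  | empty => simp only [Finset.sum_empty] at hu; exact absurd hu (by simp)
  | @insert a s hnotmem ih =>
    rw [Finset.sum_insert hnotmem] at hu
    by_cases ha : IsUnit (f a)
    · exact ⟨a, Finset.mem_insert_self a s, ha⟩
    · by_cases hs : IsUnit (∑ i ∈ s, f i)
      · obtain ⟨i, hi, hiu⟩ := ih hs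
        exact ⟨i, Finset.mem_insert_of_mem hi, hiu⟩
      · exact absurd hu (not_isUnit_add hdich ha hs)

lemma adEnd_isUnit_of_bijective {A : LieIdeal K 𝔤} (g : adEnd (K := K) A)
    (h : Function.Bijective (g : Module.End K ↥A)) : IsUnit g := by
  set f := (g : Module.End K ↥A) with hf
  let e := LinearEquiv.ofBijective f h
  have hinv : ((e.symm : ↥A →ₗ[K] ↥A) : Module.End K ↥A) ∈ adEnd (K := K) A := by
    intro x a
    apply e.injective
    show f _ = f _
    calc f (e.symm ⁅x, a⁆) = ⁅x, a⁆ := e.apply_symm_apply _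
      _ = ⁅x, f (e.symm a)⁆ := by rw [show f (e.symm a) = a from e.apply_symm_apply a]
      _ = f ⁅x, e.symm a⁆ := (g.2 x _).symm
  refine ⟨⟨g, ⟨(e.symm : ↥A →ₗ[K] ↥A), hinv⟩, ?_, ?_⟩, rfl⟩
  · apply Subtype.ext
    simp only [MulMemClass.coe_mul, OneMemClass.coe_one]
    apply LinearMap.ext; intro a
    exact e.apply_symm_apply a
  · apply Subtype.ext
    simp only [MulMemClass.coe_mul, OneMemClass.coe_one]
    apply LinearMap.ext; intro a
    exact e.symm_apply_apply a

lemma bijective_of_adEnd_isUnit {A : LieIdeal K 𝔤} (g : adEnd (K := K) A)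
    (h : IsUnit g) : Function.Bijective (g : Module.End K ↥A) := by
  have : IsUnit (g : Module.End K ↥A) := h.map (adEnd (K := K) A).val
  exact (Module.End.isUnit_iff _).mp this

instance adEnd_nontrivial {A : LieIdeal K 𝔤} [Nontrivial ↥A] :
    Nontrivial (adEnd (K := K) A) := by
  obtain ⟨a, ha⟩ := exists_ne (0 : ↥A)
  refine ⟨0, 1, fun h => ha ?_⟩
  have h2 := congrArg (fun f : adEnd (K := K) A => (f : Module.End K ↥A) a) h
  simpa using h2.symm

/-- Fitting dichotomy for equivariant endomorphisms of an indecomposable ideal. -/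
lemma adEnd_dichotomy [Module.Finite K 𝔤] {A : LieIdeal K 𝔤} (hA : ModIndec A)
    (g : adEnd (K := K) A) : IsUnit g ∨ IsNilpotent g := by
  haveI : FiniteDimensional K 𝔤 := inferInstance
  haveI hfd : FiniteDimensional K ↥A :=
    inferInstanceAs (FiniteDimensional K ↥(A : Submodule K 𝔤))
  haveI : Nontrivial ↥A := hA.1
  set f := (g : Module.End K ↥A) with hf
  set n := Module.finrank K ↥A with hn
  have hn1 : 1 ≤ n := Module.finrank_pos
  have hker : LinearMap.ker (f ^ (n + n)) = LinearMap.ker (f ^ n) := by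
    rw [Module.End.ker_pow_eq_ker_pow_finrank_of_le (by omega)]
  have hdisj : LinearMap.ker (f ^ n) ⊓ LinearMap.range (f ^ n) = ⊥ := by
    rw [eq_bot_iff]
    rintro x ⟨hk, y, rfl⟩
    have hy : y ∈ LinearMap.ker (f ^ (n + n)) := by
      rw [LinearMap.mem_ker, pow_add, Module.End.mul_apply]
      exact hk
    rw [hker, LinearMap.mem_ker] at hy
    simp [hy]
  have hsup : LinearMap.ker (f ^ n) ⊔ LinearMap.range (f ^ n) = ⊤ := by
    apply Submodule.eq_top_of_finrank_eq
    have h1 := Submodule.finrank_sup_add_finrank_inf_eq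
      (LinearMap.ker (f ^ n)) (LinearMap.range (f ^ n))
    rw [hdisj, finrank_bot, add_zero] at h1
    have h2 := LinearMap.finrank_range_add_finrank_ker (f ^ n)
    omega
  have hpow : ∀ (x : 𝔤) (a : ↥A), (f ^ n) ⁅x, a⁆ = ⁅x, (f ^ n) a⁆ := pow_mem_adEnd A g n
  set Kn : LieSubmodule K 𝔤 ↥A :=
    { toSubmodule := LinearMap.ker (f ^ n)
      lie_mem := by
        intro x m hm
        show (f ^ n) ⁅x, m⁆ = 0
        rw [hpow]
        replace hm : (f ^ n) m = 0 := hm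
        rw [hm, lie_zero] } with hKn
  set Rn : LieSubmodule K 𝔤 ↥A :=
    { toSubmodule := LinearMap.range (f ^ n)
      lie_mem := by
        rintro x m ⟨y, rfl⟩
        exact ⟨⁅x, y⁆, hpow x y⟩ } with hRn
  set A1 : LieIdeal K 𝔤 := LieSubmodule.map (LieSubmodule.incl A) Kn with hA1
  set A2 : LieIdeal K 𝔤 := LieSubmodule.map (LieSubmodule.incl A) Rn with hA2
  have hsubinj : Function.Injective ((A : Submodule K 𝔤).subtype) := Subtype.coe_injective
  have hinf : A1 ⊓ A2 = ⊥ := by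
    rw [← coe_eq_iff', coe_inf', coe_bot']
    show Submodule.map (A : Submodule K 𝔤).subtype (LinearMap.ker (f ^ n)) ⊓
      Submodule.map (A : Submodule K 𝔤).subtype (LinearMap.range (f ^ n)) = ⊥
    erw [← Submodule.map_inf _ hsubinj, hdisj, Submodule.map_bot]
  have hsupA : A1 ⊔ A2 = A := by
    rw [← coe_eq_iff', coe_sup']
    show Submodule.map (A : Submodule K 𝔤).subtype (LinearMap.ker (f ^ n)) ⊔
      Submodule.map (A : Submodule K 𝔤).subtype (LinearMap.range (f ^ n))
      = (A : Submodule K 𝔤)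
    erw [← Submodule.map_sup, hsup, Submodule.map_subtype_top]
  rcases hA.2 A1 A2 hinf hsupA with h1 | h1
  · -- kernel trivial: bijective
    left
    have hkbot : LinearMap.ker (f ^ n) = ⊥ := by
      rw [eq_bot_iff]
      intro x hx
      have : (↑x : 𝔤) ∈ A1 := ⟨x, hx, rfl⟩
      rw [h1] at this
      have hx0 : (↑x : 𝔤) = 0 := by simpa using this
      simpa using Subtype.ext hx0
    have hkf : LinearMap.ker f = ⊥ := by
      rw [eq_bot_iff]
      intro x hx
      have : x ∈ LinearMap.ker (f ^ n) :=
        Module.End.ker_pow_le_ker_pow_finrank f 1 (by simpa using hx)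
      rw [hkbot] at this
      simpa using this
    have hbij : Function.Bijective f :=
      ⟨LinearMap.ker_eq_bot.mp hkf,
       (LinearMap.injective_iff_surjective).mp (LinearMap.ker_eq_bot.mp hkf)⟩
    exact adEnd_isUnit_of_bijective g hbij
  · -- range trivial: nilpotent
    right
    refine ⟨n, ?_⟩
    have : (((g ^ n : adEnd (K := K) A)) : Module.End K ↥A) = f ^ n := by
      push_cast
      rfl
    apply Subtype.ext
    rw [this]
    show f ^ n = 0
    ext x
    have : (↑((f ^ n) x) : 𝔤) ∈ A2 := ⟨(f ^ n) x, ⟨x, rfl⟩, rfl⟩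
    rw [h1] at this
    have h0 : (↑((f ^ n) x) : 𝔤) = 0 := by simpa using this
    simpa using Subtype.ext h0

lemma inj_on_of_disjoint_ker {q : 𝔤 →ₗ⁅K,𝔤⁆ 𝔤} {P : LieIdeal K 𝔤}
    (hinj : Disjoint (P : Submodule K 𝔤) (LinearMap.ker (q : 𝔤 →ₗ[K] 𝔤)))
    {x : 𝔤} (hx : x ∈ P) (hqx : q x = 0) : x = 0 := by
  have : x ∈ (P : Submodule K 𝔤) ⊓ LinearMap.ker (q : 𝔤 →ₗ[K] 𝔤) :=
    ⟨hx, LinearMap.mem_ker.mpr hqx⟩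
  rw [disjoint_iff.mp hinj] at this
  simpa using this

/-- transporting indecomposability along an equivariant projection -/
lemma modIndec_map (q : 𝔤 →ₗ⁅K,𝔤⁆ 𝔤) (P : LieIdeal K 𝔤)
    (hinj : Disjoint (P : Submodule K 𝔤) (LinearMap.ker (q : 𝔤 →ₗ[K] 𝔤)))
    (hP : ModIndec P) : ModIndec (LieSubmodule.map q P) := by
  constructor
  · -- nontrivial
    rw [LieSubmodule.nontrivial_iff_ne_bot]
    haveI := hP.1
    have hPne : P ≠ ⊥ :=
      (LieSubmodule.nontrivial_iff_ne_bot (R := K) (L := 𝔤) (M := 𝔤)).mp hP.1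
    intro hbot
    apply hPne
    rw [LieSubmodule.eq_bot_iff]
    intro p hp
    have : q p ∈ LieSubmodule.map q P := ⟨p, hp, rfl⟩
    rw [hbot] at this
    have hq0 : q p = 0 := by simpa using this
    exact inj_on_of_disjoint_ker hinj hp hq0
  · intro W1 W2 hinf hsup
    set V1 : LieIdeal K 𝔤 := LieSubmodule.comap q W1 ⊓ P with hV1
    set V2 : LieIdeal K 𝔤 := LieSubmodule.comap q W2 ⊓ P with hV2
    have hWmap : ∀ i : Bool, (if i then W1 else W2) ≤ LieSubmodule.map q P := by
      intro i
      cases i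
      · simp only [if_neg Bool.false_ne_true]
        rw [← hsup]; exact le_sup_right
      · simp only [if_pos rfl]
        rw [← hsup]; exact le_sup_left
    have hW1map : W1 ≤ LieSubmodule.map q P := hWmap true
    have hW2map : W2 ≤ LieSubmodule.map q P := hWmap false
    have hVinf : V1 ⊓ V2 = ⊥ := by
      rw [LieSubmodule.eq_bot_iff]
      rintro m ⟨⟨hm1, hmP⟩, ⟨hm2, -⟩⟩
      have : q m ∈ W1 ⊓ W2 := ⟨hm1, hm2⟩
      rw [hinf] at this
      have hq0 : q m = 0 := by simpa using this
      exact inj_on_of_disjoint_ker hinj hmP hq0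
    have hVsup : V1 ⊔ V2 = P := by
      apply le_antisymm
      · exact sup_le inf_le_right inf_le_right
      · intro p hp
        have : q p ∈ W1 ⊔ W2 := by rw [hsup]; exact ⟨p, hp, rfl⟩
        rw [LieSubmodule.mem_sup] at this
        obtain ⟨w1, hw1, w2, hw2, hsum⟩ := this
        obtain ⟨p1, hp1, hq1⟩ := hW1map hw1
        obtain ⟨p2, hp2, hq2⟩ := hW2map hw2
        have hq1' : q p1 = w1 := hq1
        have hq2' : q p2 = w2 := hq2
        have hker : p - p1 - p2 = 0 := by
          refine inj_on_of_disjoint_ker hinj (sub_mem (sub_mem hp hp1) hp2) ?_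
          show (q : 𝔤 →ₗ[K] 𝔤) (p - p1 - p2) = 0
          rw [map_sub, map_sub]
          show q p - q p1 - q p2 = 0
          rw [hq1', hq2', ← hsum]
          abel
        have hpeq : p = p1 + p2 := by
          rw [sub_sub] at hker
          exact sub_eq_zero.mp hker
        rw [LieSubmodule.mem_sup]
        exact ⟨p1, ⟨show q p1 ∈ W1 by rw [hq1']; exact hw1, hp1⟩,
          p2, ⟨show q p2 ∈ W2 by rw [hq2']; exact hw2, hp2⟩, hpeq.symm⟩
    rcases hP.2 V1 V2 hVinf hVsup with h | h
    · left
      rw [LieSubmodule.eq_bot_iff]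
      intro w hw
      obtain ⟨p, hp, hqp⟩ := hW1map hw
      have hpV : p ∈ V1 := ⟨show q p ∈ W1 from hqp ▸ hw, hp⟩
      rw [h] at hpV
      have hp0 : p = 0 := by simpa using hpV
      rw [← hqp, hp0, map_zero]
    · right
      rw [LieSubmodule.eq_bot_iff]
      intro w hw
      obtain ⟨p, hp, hqp⟩ := hW2map hw
      have hpV : p ∈ V2 := ⟨show q p ∈ W2 from hqp ▸ hw, hp⟩
      rw [h] at hpV
      have hp0 : p = 0 := by simpa using hpV
      rw [← hqp, hp0, map_zero]

/-- A Lie-algebra-morphism projection restricted to an ideal on which it is injective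
gives a Lie algebra isomorphism onto the image. -/
noncomputable def lieEquivMap (q : 𝔤 →ₗ⁅K,𝔤⁆ 𝔤)
    (hbr : ∀ y z : 𝔤, q ⁅y, z⁆ = ⁅q y, q z⁆) (P : LieIdeal K 𝔤)
    (hinj : Disjoint (P : Submodule K 𝔤) (LinearMap.ker (q : 𝔤 →ₗ[K] 𝔤))) :
    ↥P ≃ₗ⁅K⁆ ↥(LieSubmodule.map q P) := by
  refine LieEquiv.ofBijective
    { toLinearMap := ((q : 𝔤 →ₗ[K] 𝔤).comp (P : Submodule K 𝔤).subtype).codRestrict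
        ((LieSubmodule.map q P : LieIdeal K 𝔤) : Submodule K 𝔤)
        (fun p => ⟨(p : 𝔤), p.2, rfl⟩)
      map_lie' := by
        intro x y
        apply Subtype.ext
        show q ⁅(x : 𝔤), (y : 𝔤)⁆ = ⁅q (x : 𝔤), q (y : 𝔤)⁆
        exact hbr _ _ } ?_
  constructor
  · intro a b hab
    apply Subtype.ext
    have h0 : q ((a : 𝔤) - b) = 0 := by
      show (q : 𝔤 →ₗ[K] 𝔤) ((a : 𝔤) - b) = 0
      have h1 : ((q : 𝔤 →ₗ[K] 𝔤) (a : 𝔤) : 𝔤) = (q : 𝔤 →ₗ[K] 𝔤) (b : 𝔤) :=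
        congrArg Subtype.val hab
      rw [map_sub, h1, sub_self]
    have := inj_on_of_disjoint_ker hinj (sub_mem a.2 b.2) h0
    have h2 : (a : 𝔤) = b := by
      rwa [sub_eq_zero] at this
    exact h2
  · rintro ⟨w, p, hp, rfl⟩
    exact ⟨⟨p, hp⟩, rfl⟩

/-- sup of a family equals member sup rest -/
lemma sup_biSup_ne {α ι : Type*} [CompleteLattice α] (S : ι → α) (i₀ : ι) :
    S i₀ ⊔ (⨆ (i) (_ : i ≠ i₀), S i) = ⨆ i, S i := by
  apply le_antisymm
  · exact sup_le (le_iSup _ _) (iSup_le fun i => iSup_le fun _ => le_iSup _ _)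
  · refine iSup_le fun i => ?_
    by_cases h : i = i₀
    · subst h; exact le_sup_left
    · exact le_sup_of_le_right (le_iSup_of_le i (le_iSup_of_le h le_rfl))

lemma sup_biSup_ne' {α ι : Type*} [CompleteLattice α] (S : ι → α) (i₀ : ι) :
    S i₀ ⊔ (⨆ i : {i // i ≠ i₀}, S i.1) = ⨆ i, S i := by
  rw [iSup_subtype]
  exact sup_biSup_ne S i₀

lemma isCompl_aux {ι : Type*} {S : ι → Submodule K 𝔤} {Nn C : Submodule K 𝔤}
    (hind : iSupIndep S) (hsup : ⨆ i, S i = Nn) (hNC : IsCompl Nn C) (i₀ : ι) :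
    IsCompl (S i₀) ((⨆ i : {i // i ≠ i₀}, S i.1) ⊔ C) := by
  constructor
  · refine disjoint_aux ((le_iSup S i₀).trans hsup.le)
      ((iSup_le fun i => (le_iSup S i.1).trans hsup.le)) ?_ hNC.disjoint
    rw [iSup_subtype]
    exact hind i₀
  · rw [codisjoint_iff, ← sup_assoc, sup_biSup_ne', hsup, ← codisjoint_iff]
    exact hNC.codisjoint

lemma map_disjoint_aux {q : 𝔤 →ₗ[K] 𝔤} {X Y Mm : Submodule K 𝔤} (hX : X ≤ Mm) (hY : Y ≤ Mm)
    (hk : Disjoint Mm (LinearMap.ker q)) (hXY : Disjoint X Y) :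
    Disjoint (X.map q) (Y.map q) := by
  rw [Submodule.disjoint_def]
  rintro z ⟨x, hx, rfl⟩ ⟨y, hy, hyz⟩
  have hxy : x - y ∈ LinearMap.ker q := by rw [LinearMap.mem_ker, map_sub, hyz, sub_self]
  have hxyM : x - y ∈ Mm := sub_mem (hX hx) (hY hy)
  have h0 : x - y = 0 := Submodule.disjoint_def.mp hk _ hxyM hxy
  have hxx : x = y := sub_eq_zero.mp h0
  have hx0 : x = 0 := Submodule.disjoint_def.mp hXY x hx (hxx ▸ hy)
  rw [hx0, map_zero]

set_option maxHeartbeats 3200000 in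
set_option synthInstance.maxHeartbeats 400000 in
/-- The key uniqueness lemma: two decompositions of a complemented ideal into
indecomposable ideals are equivalent. -/
lemma key [Module.Finite K 𝔤] (r : ℕ) :
    ∀ {ι κ : Type} [Fintype ι] [Fintype κ], Fintype.card ι = r →
    ∀ (N C : LieIdeal K 𝔤), IsCompl (N : Submodule K 𝔤) (C : Submodule K 𝔤) →
    ∀ (I : ι → LieIdeal K 𝔤) (J : κ → LieIdeal K 𝔤),
    (∀ i, ModIndec (I i)) → (∀ k, ModIndec (J k)) →
    iSupIndep (fun i => (I i : Submodule K 𝔤)) → (⨆ i, (I i : Submodule K 𝔤)) = N →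
    iSupIndep (fun k => (J k : Submodule K 𝔤)) → (⨆ k, (J k : Submodule K 𝔤)) = N →
    ∃ σ : ι ≃ κ, ∀ i, Nonempty (↥(I i) ≃ₗ⁅K⁆ ↥(J (σ i))) := by
  induction r with
  | zero =>
    intro ι κ _ _ hcard N C hNC I J hI hJ hIind hIsup hJind hJsup
    haveI : IsEmpty ι := Fintype.card_eq_zero_iff.mp hcard
    have hNbot : (N : Submodule K 𝔤) = ⊥ := by rw [← hIsup, iSup_of_empty]
    haveI : IsEmpty κ := by
      by_contra h
      rw [not_isEmpty_iff] at h
      obtain ⟨k⟩ := h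
      have hk : (J k : Submodule K 𝔤) = ⊥ :=
        le_bot_iff.mp ((le_iSup (fun k => (J k : Submodule K 𝔤)) k).trans
          (hJsup.le.trans hNbot.le))
      have hk2 : J k = ⊥ := by
        rw [← coe_eq_iff' (J k) ⊥, hk, coe_bot']
      exact (LieSubmodule.nontrivial_iff_ne_bot (R := K) (L := 𝔤) (M := 𝔤)).mp (hJ k).1 hk2
    exact ⟨Equiv.equivOfIsEmpty ι κ, fun i => isEmptyElim i⟩
  | succ r ih =>
    intro ι κ _ _ hcard N C hNC I J hI hJ hIind hIsup hJind hJsup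
    classical
    haveI : Nonempty ι := Fintype.card_pos_iff.mp (by omega)
    obtain ⟨i₀⟩ := ‹Nonempty ι›
    set A : LieIdeal K 𝔤 := I i₀ with hA
    haveI hAnt : Nontrivial ↥A := (hI i₀).1
    set B : LieIdeal K 𝔤 := (⨆ i : {i // i ≠ i₀}, I i.1) ⊔ C with hB
    have hBcoe : (B : Submodule K 𝔤)
        = (⨆ i : {i // i ≠ i₀}, (I i.1 : Submodule K 𝔤)) ⊔ (C : Submodule K 𝔤) := by
      rw [hB, coe_sup', coe_iSup']
    have hABc : IsCompl (A : Submodule K 𝔤) (B : Submodule K 𝔤) := by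
      rw [hBcoe]; exact isCompl_aux hIind hIsup hNC i₀
    set Q : κ → LieIdeal K 𝔤 := fun k => (⨆ l : {l // l ≠ k}, J l.1) ⊔ C with hQ
    have hQc : ∀ k : κ, IsCompl ((J k : Submodule K 𝔤)) ((Q k : Submodule K 𝔤)) := by
      intro k
      rw [hQ, coe_sup', coe_iSup']
      exact isCompl_aux hJind hJsup hNC k
    set eh : 𝔤 →ₗ[K] ↥A := lprj A B hABc with heh
    set ph : (k : κ) → 𝔤 →ₗ[K] ↥(J k) := fun k => lprj (J k) (Q k) (hQc k) with hph
    have hNmem : ∀ i : ι, (I i : Submodule K 𝔤) ≤ (N : Submodule K 𝔤) :=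
      fun i => (le_iSup (fun i => (I i : Submodule K 𝔤)) i).trans hIsup.le
    have hJNle : ∀ k : κ, (J k : Submodule K 𝔤) ≤ (N : Submodule K 𝔤) :=
      fun k => (le_iSup (fun k => (J k : Submodule K 𝔤)) k).trans hJsup.le
    have hQmem : ∀ (k l : κ), l ≠ k → (J l : LieIdeal K 𝔤) ≤ Q k := by
      intro k l hl
      exact le_sup_of_le_left (le_iSup (fun l : {l // l ≠ k} => J l.1) ⟨l, hl⟩)
    have hsumid : ∀ y : 𝔤, y ∈ (N : Submodule K 𝔤) → (∑ k : κ, (↑(ph k y) : 𝔤)) = y := by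
      intro y hy
      rw [← hJsup] at hy
      refine Submodule.iSup_induction (motive := fun y => (∑ k : κ, (↑(ph k y) : 𝔤)) = y)
        _ hy ?_ ?_ ?_
      · intro l x hx
        rw [Finset.sum_eq_single l]
        · exact congrArg Subtype.val (lprj_apply_left (hQc l) hx)
        · intro k _ hk
          have hmem : x ∈ Q k := hQmem k l (Ne.symm hk) hx
          rw [lprj_apply_right (hQc k) hmem]
          rfl
        · intro h; exact absurd (Finset.mem_univ l) h
      · simp
      · intro x y hx hy
        have hcoe : ∀ k : κ, (↑(ph k x + ph k y) : 𝔤) = ↑(ph k x) + ↑(ph k y) :=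
          fun k => rfl
        simp only [map_add, hcoe, Finset.sum_add_distrib, hx, hy]
    have hgmem : ∀ k : κ,
        (eh ∘ₗ (((J k : LieIdeal K 𝔤) : Submodule K 𝔤).subtype ∘ₗ
          (ph k ∘ₗ (A : Submodule K 𝔤).subtype))) ∈ adEnd (K := K) A := by
      intro k x a
      apply Subtype.ext
      show (↑(eh (↑(ph k ⁅x, (↑a : 𝔤)⁆))) : 𝔤) = ↑(⁅x, eh (↑(ph k (↑a : 𝔤)))⁆ : ↥A)
      calc (↑(eh (↑(ph k ⁅x, (↑a : 𝔤)⁆))) : 𝔤)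
          = ↑(eh ⁅x, (↑(ph k (↑a : 𝔤)) : 𝔤)⁆) := by rw [lprj_lie (hQc k)]
        _ = ⁅x, (↑(eh (↑(ph k (↑a : 𝔤)))) : 𝔤)⁆ := lprj_lie hABc x _
    set G : κ → adEnd (K := K) A := fun k => ⟨_, hgmem k⟩ with hG
    have hGapp : ∀ (k : κ) (a : ↥A), (G k : Module.End K ↥A) a = eh (↑(ph k (↑a : 𝔤))) :=
      fun k a => rfl
    have hGsum : (∑ k : κ, G k) = 1 := by
      apply Subtype.ext
      rw [AddSubmonoidClass.coe_finset_sum]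
      apply LinearMap.ext
      intro a
      rw [LinearMap.sum_apply]
      show (∑ k : κ, eh (↑(ph k (↑a : 𝔤)))) = a
      rw [← map_sum eh (fun k => (↑(ph k (↑a : 𝔤)) : 𝔤)) Finset.univ]
      rw [hsumid _ (hNmem i₀ a.2)]
      exact lprj_apply_left hABc a.2
    have hdich : ∀ x : adEnd (K := K) A, IsUnit x ∨ IsNilpotent x :=
      fun x => adEnd_dichotomy (hI i₀) x
    obtain ⟨j, -, hGj⟩ : ∃ k ∈ Finset.univ, IsUnit (G k) :=
      exists_isUnit_of_isUnit_sum hdich Finset.univ G (by rw [hGsum]; exact isUnit_one)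
    set φ : ↥A →ₗ[K] ↥(J j) := (ph j) ∘ₗ (A : Submodule K 𝔤).subtype with hφ
    set ψ : ↥(J j) →ₗ[K] ↥A :=
      eh ∘ₗ ((J j : LieIdeal K 𝔤) : Submodule K 𝔤).subtype with hψ
    have hcomp : ∀ a : ↥A, ψ (φ a) = (G j : Module.End K ↥A) a := fun a => rfl
    have hgbij : Function.Bijective (G j : Module.End K ↥A) :=
      bijective_of_adEnd_isUnit _ hGj
    set e' : ↥A ≃ₗ[K] ↥A := LinearEquiv.ofBijective _ hgbij with he'
    have he'app : ∀ a : ↥A, e' a = (G j : Module.End K ↥A) a := fun a => rfl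
    have hφinj : Function.Injective φ := by
      intro a b hab
      apply hgbij.injective
      rw [← hcomp, ← hcomp, hab]
    have hψlie : ∀ (x : 𝔤) (z : ↥(J j)), ψ ⁅x, z⁆ = ⁅x, ψ z⁆ := by
      intro x z
      apply Subtype.ext
      exact lprj_lie hABc x (↑z)
    have hφlie : ∀ (x : 𝔤) (a : ↥A), φ ⁅x, a⁆ = ⁅x, φ a⁆ := by
      intro x a
      apply Subtype.ext
      exact lprj_lie (hQc j) x (↑a)
    have hsymmlie : ∀ (x : 𝔤) (u : ↥A), e'.symm ⁅x, u⁆ = ⁅x, e'.symm u⁆ := by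
      intro x u
      apply e'.injective
      rw [e'.apply_symm_apply]
      symm
      have h2 := (G j).2 x (e'.symm u)
      calc e' ⁅x, e'.symm u⁆ = (G j : Module.End K ↥A) ⁅x, e'.symm u⁆ := rfl
        _ = ⁅x, (G j : Module.End K ↥A) (e'.symm u)⁆ := h2
        _ = ⁅x, e' (e'.symm u)⁆ := rfl
        _ = ⁅x, u⁆ := by rw [e'.apply_symm_apply]
    have hθmem : (φ ∘ₗ ((e'.symm : ↥A ≃ₗ[K] ↥A) : ↥A →ₗ[K] ↥A) ∘ₗ ψ)
        ∈ adEnd (K := K) (J j) := by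
      intro x z
      show φ (e'.symm (ψ ⁅x, z⁆)) = ⁅x, φ (e'.symm (ψ z))⁆
      rw [hψlie, hsymmlie, hφlie]
    set Θ : adEnd (K := K) (J j) := ⟨_, hθmem⟩ with hΘ
    have hΘapp : ∀ z, (Θ : Module.End K ↥(J j)) z = φ (e'.symm (ψ z)) := fun z => rfl
    have hψφ : ∀ a : ↥A, ψ (φ a) = e' a := fun a => rfl
    have hΘidem : ∀ z, (Θ : Module.End K ↥(J j)) ((Θ : Module.End K ↥(J j)) z)
        = (Θ : Module.End K ↥(J j)) z := by
      intro z
      rw [hΘapp, hΘapp, hψφ, e'.symm_apply_apply]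
    obtain ⟨a₀, ha₀⟩ := exists_ne (0 : ↥A)
    have hθφ : ∀ a : ↥A, (Θ : Module.End K ↥(J j)) (φ a) = φ a := by
      intro a
      rw [hΘapp, hψφ, e'.symm_apply_apply]
    have hφa₀ : φ a₀ ≠ 0 := by
      intro h
      exact ha₀ (hφinj (by rw [h, map_zero]))
    have hΘne : Θ ≠ 0 := by
      intro h
      apply hφa₀
      have h2 := hθφ a₀
      rw [h] at h2
      simpa using h2.symm
    haveI : Nontrivial ↥(J j) := (hJ j).1
    have hΘunit : IsUnit Θ := by
      rcases adEnd_dichotomy (hJ j) Θ with h | h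
      · exact h
      · exfalso
        obtain ⟨m, hm⟩ := h
        have hidem : IsIdempotentElem Θ := by
          apply Subtype.ext
          simp only [MulMemClass.coe_mul]
          apply LinearMap.ext
          intro z
          exact hΘidem z
        cases m with
        | zero =>
          rw [pow_zero] at hm
          exact one_ne_zero hm
        | succ m =>
          apply hΘne
          rw [← hidem.pow_succ_eq m, hm]
    have hΘbij := bijective_of_adEnd_isUnit _ hΘunit
    have hΘid : ∀ z, (Θ : Module.End K ↥(J j)) z = z := by
      intro z
      apply hΘbij.injective
      exact hΘidem z
    have hφsurj : Function.Surjective φ := by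
      intro z
      refine ⟨e'.symm (ψ z), ?_⟩
      have := hΘid z
      rw [hΘapp] at this
      exact this
    have hφbij : Function.Bijective φ := ⟨hφinj, hφsurj⟩
    have hψinj : Function.Injective ψ := by
      intro z w hzw
      have h1 : (Θ : Module.End K ↥(J j)) z = (Θ : Module.End K ↥(J j)) w := by
        rw [hΘapp, hΘapp, hzw]
      rw [hΘid, hΘid] at h1
      exact h1
    have hJBdisj : Disjoint ((J j : LieIdeal K 𝔤) : Submodule K 𝔤) (B : Submodule K 𝔤) := by
      rw [Submodule.disjoint_def]
      intro x hxJ hxB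
      have h1 : ψ ⟨x, hxJ⟩ = 0 := by
        show eh x = 0
        exact lprj_apply_right hABc hxB
      have h2 : (⟨x, hxJ⟩ : ↥(J j)) = 0 := hψinj (by rw [h1, map_zero])
      simpa using congrArg Subtype.val h2
    have hAleJB : (A : Submodule K 𝔤)
        ≤ ((J j : LieIdeal K 𝔤) : Submodule K 𝔤) ⊔ (B : Submodule K 𝔤) := by
      intro a ha
      have hy : (↑(φ (e'.symm ⟨a, ha⟩)) : 𝔤) ∈ ((J j : LieIdeal K 𝔤) : Submodule K 𝔤) :=
        (φ (e'.symm ⟨a, ha⟩)).2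
      have hsub0 : eh (a - ↑(φ (e'.symm ⟨a, ha⟩))) = 0 := by
        rw [map_sub]
        have h1 : eh a = ⟨a, ha⟩ := lprj_apply_left hABc ha
        have h2 : eh (↑(φ (e'.symm ⟨a, ha⟩))) = ⟨a, ha⟩ := by
          show ψ (φ (e'.symm ⟨a, ha⟩)) = _
          rw [hψφ, e'.apply_symm_apply]
        rw [h1, h2, sub_self]
      have hsub : a - ↑(φ (e'.symm ⟨a, ha⟩)) ∈ (B : Submodule K 𝔤) :=
        (lprj_eq_zero_iff hABc).mp hsub0
      have hsum' : a = ↑(φ (e'.symm ⟨a, ha⟩)) + (a - ↑(φ (e'.symm ⟨a, ha⟩))) := by abel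
      rw [hsum']
      exact Submodule.add_mem_sup hy hsub
    have hJBc : IsCompl ((J j : LieIdeal K 𝔤) : Submodule K 𝔤) (B : Submodule K 𝔤) := by
      constructor
      · exact hJBdisj
      · rw [codisjoint_iff, eq_top_iff]
        conv_lhs => rw [← codisjoint_iff.mp hABc.codisjoint]
        exact sup_le hAleJB le_sup_right
    -- exchange isomorphism
    set Φhom : ↥A →ₗ⁅K⁆ ↥(J j) :=
      { toLinearMap := φ
        map_lie' := by
          intro a b
          apply Subtype.ext
          exact lprj_bracket (hQc j) (↑a) (↑b) } with hΦhom
    have hΦbij : Function.Bijective Φhom := hφbij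
    set Φ : ↥A ≃ₗ⁅K⁆ ↥(J j) := LieEquiv.ofBijective Φhom hΦbij with hΦ
    -- the projection q onto B along J j
    set ql : 𝔤 →ₗ[K] 𝔤 := (B : Submodule K 𝔤).subtype ∘ₗ lprj B (J j) hJBc.symm with hql
    set qhom : 𝔤 →ₗ⁅K,𝔤⁆ 𝔤 :=
      { toLinearMap := ql
        map_lie' := by
          intro x m
          exact lprj_lie hJBc.symm x m } with hqhom
    have hqlin : (qhom : 𝔤 →ₗ[K] 𝔤) = ql := rfl
    have hqapp : ∀ x : 𝔤, qhom x = ql x := fun x => rfl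
    have hqbr : ∀ y z : 𝔤, qhom ⁅y, z⁆ = ⁅qhom y, qhom z⁆ :=
      fun y z => lprj_bracket hJBc.symm y z
    have hqzero : ∀ x : 𝔤, ql x = 0 ↔ x ∈ ((J j : LieIdeal K 𝔤) : Submodule K 𝔤) := by
      intro x
      constructor
      · intro h
        have h2 : lprj B (J j) hJBc.symm x = 0 := Subtype.coe_injective h
        exact (lprj_eq_zero_iff hJBc.symm).mp h2
      · intro h
        show (↑(lprj B (J j) hJBc.symm x) : 𝔤) = 0
        rw [lprj_apply_right hJBc.symm h]
        rfl
    have hqkerlin : LinearMap.ker ql = ((J j : LieIdeal K 𝔤) : Submodule K 𝔤) := by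
      ext x
      rw [LinearMap.mem_ker]
      exact hqzero x
    set Nstar : LieIdeal K 𝔤 := ⨆ i : {i // i ≠ i₀}, I i.1 with hNstar
    have hNstarcoe : (Nstar : Submodule K 𝔤)
        = ⨆ i : {i // i ≠ i₀}, (I i.1 : Submodule K 𝔤) := coe_iSup' _
    have hNstarleN : (Nstar : Submodule K 𝔤) ≤ (N : Submodule K 𝔤) := by
      rw [hNstarcoe]
      exact iSup_le fun i => hNmem i.1
    set Cstar : LieIdeal K 𝔤 := C ⊔ J j with hCstar
    have hCstarcoe : (Cstar : Submodule K 𝔤)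
        = (C : Submodule K 𝔤) ⊔ ((J j : LieIdeal K 𝔤) : Submodule K 𝔤) := coe_sup' _ _
    have hBNstar : (B : Submodule K 𝔤)
        = (Nstar : Submodule K 𝔤) ⊔ (C : Submodule K 𝔤) := by
      rw [hBcoe, hNstarcoe]
    have hNstarB : (Nstar : Submodule K 𝔤) ≤ (B : Submodule K 𝔤) := by
      rw [hBNstar]; exact le_sup_left
    have hCB : (C : Submodule K 𝔤) ≤ (B : Submodule K 𝔤) := by
      rw [hBNstar]; exact le_sup_right
    have hcompl' : IsCompl (Nstar : Submodule K 𝔤) (Cstar : Submodule K 𝔤) := by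
      constructor
      · rw [disjoint_iff]
        have h1 : ((C : Submodule K 𝔤) ⊔ ((J j : LieIdeal K 𝔤) : Submodule K 𝔤))
            ⊓ (B : Submodule K 𝔤) = (C : Submodule K 𝔤) := by
          rw [sup_inf_assoc_of_le _ hCB, disjoint_iff.mp hJBdisj, sup_bot_eq]
        calc (Nstar : Submodule K 𝔤) ⊓ (Cstar : Submodule K 𝔤)
            = ((Nstar : Submodule K 𝔤) ⊓ (B : Submodule K 𝔤))
              ⊓ (Cstar : Submodule K 𝔤) := by rw [inf_eq_left.mpr hNstarB]
          _ = (Nstar : Submodule K 𝔤)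
              ⊓ ((Cstar : Submodule K 𝔤) ⊓ (B : Submodule K 𝔤)) := by
              rw [inf_assoc, inf_comm (B : Submodule K 𝔤) _]
          _ = (Nstar : Submodule K 𝔤) ⊓ (C : Submodule K 𝔤) := by
              rw [hCstarcoe, h1]
          _ = ⊥ := disjoint_iff.mp (hNC.disjoint.mono_left hNstarleN)
      · rw [codisjoint_iff, hCstarcoe, ← sup_assoc, ← hBNstar, sup_comm]
        exact codisjoint_iff.mp hJBc.codisjoint
    set Jm : {k : κ // k ≠ j} → LieIdeal K 𝔤 :=
      fun k => LieSubmodule.map qhom (J k.1) with hJm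
    have hJmcoe : ∀ k : {k : κ // k ≠ j}, ((Jm k) : Submodule K 𝔤)
        = Submodule.map ql ((J k.1 : LieIdeal K 𝔤) : Submodule K 𝔤) := fun k => rfl
    have hpairdisj : ∀ k : {k : κ // k ≠ j},
        Disjoint ((J k.1 : LieIdeal K 𝔤) : Submodule K 𝔤)
          (LinearMap.ker (qhom : 𝔤 →ₗ[K] 𝔤)) := by
      intro k
      rw [hqlin, hqkerlin]
      exact hJind.pairwiseDisjoint k.2
    have hJmmod : ∀ k : {k : κ // k ≠ j}, ModIndec (Jm k) :=
      fun k => modIndec_map qhom _ (hpairdisj k) (hJ k.1)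
    have hJmiso : ∀ k : {k : κ // k ≠ j}, Nonempty (↥(J k.1) ≃ₗ⁅K⁆ ↥(Jm k)) :=
      fun k => ⟨lieEquivMap qhom hqbr _ (hpairdisj k)⟩
    set Mfull : Submodule K 𝔤 :=
      ⨆ k : {k : κ // k ≠ j}, ((J k.1 : LieIdeal K 𝔤) : Submodule K 𝔤) with hMfull
    have hMle : ∀ k : {k : κ // k ≠ j},
        ((J k.1 : LieIdeal K 𝔤) : Submodule K 𝔤) ≤ Mfull := fun k => by
      rw [hMfull]
      exact le_iSup (fun k : {k : κ // k ≠ j} =>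
        ((J k.1 : LieIdeal K 𝔤) : Submodule K 𝔤)) k
    have hJjM : Disjoint ((J j : LieIdeal K 𝔤) : Submodule K 𝔤) Mfull := by
      refine Disjoint.mono_right ?_ (hJind j)
      exact iSup_le fun k => le_iSup_of_le k.1 (le_iSup_of_le k.2 le_rfl)
    have hMker : Disjoint Mfull (LinearMap.ker ql) := by
      rw [hqkerlin]
      exact hJjM.symm
    have hqB : ∀ x ∈ (B : Submodule K 𝔤), ql x = x := by
      intro x hx
      show (↑(lprj B (J j) hJBc.symm x) : 𝔤) = x
      rw [lprj_apply_left hJBc.symm hx]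
    have hqJj : ∀ x ∈ ((J j : LieIdeal K 𝔤) : Submodule K 𝔤), ql x = 0 :=
      fun x hx => (hqzero x).mpr hx
    have hqmemN : ∀ x ∈ (N : Submodule K 𝔤), ql x ∈ (N : Submodule K 𝔤) := by
      intro x hx
      have hsub : x - ql x ∈ ((J j : LieIdeal K 𝔤) : Submodule K 𝔤) :=
        lprj_sub_mem hJBc.symm x
      have h2 : ql x = x - (x - ql x) := by abel
      rw [h2]
      exact sub_mem hx (hJNle j hsub)
    have hNB : (N : Submodule K 𝔤) ⊓ (B : Submodule K 𝔤) = (Nstar : Submodule K 𝔤) := by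
      rw [hBNstar, inf_comm, sup_inf_assoc_of_le _ hNstarleN,
        disjoint_iff.mp hNC.disjoint.symm, sup_bot_eq]
    have hqJkle : ∀ k : {k : κ // k ≠ j},
        ((Jm k) : Submodule K 𝔤) ≤ (Nstar : Submodule K 𝔤) := by
      intro k
      rw [hJmcoe]
      rintro z ⟨x, hx, rfl⟩
      rw [← hNB]
      refine Submodule.mem_inf.mpr ⟨hqmemN x (hJNle k.1 hx), ?_⟩
      exact (lprj B (J j) hJBc.symm x).2
    have hJmind : iSupIndep (fun k : {k : κ // k ≠ j} => ((Jm k) : Submodule K 𝔤)) := by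
      intro k
      have hre : (⨆ (l : {k : κ // k ≠ j}) (_ : l ≠ k), ((Jm l) : Submodule K 𝔤))
          = Submodule.map ql (⨆ (l : {k : κ // k ≠ j}) (_ : l ≠ k),
            ((J l.1 : LieIdeal K 𝔤) : Submodule K 𝔤)) := by
        rw [Submodule.map_iSup]
        refine iSup_congr fun l => ?_
        rw [Submodule.map_iSup]
        exact iSup_congr fun _ => hJmcoe l
      rw [hre]
      refine map_disjoint_aux (hMle k) ?_ hMker ?_
      · exact iSup_le fun l => iSup_le fun _ => hMle l
      · refine Disjoint.mono_right ?_ (hJind k.1)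
        refine iSup_le fun l => iSup_le fun hl => ?_
        exact le_iSup_of_le l.1 (le_iSup_of_le (fun h => hl (Subtype.ext h)) le_rfl)
    have hJmsup : (⨆ k : {k : κ // k ≠ j}, ((Jm k) : Submodule K 𝔤))
        = (Nstar : Submodule K 𝔤) := by
      apply le_antisymm
      · exact iSup_le hqJkle
      · intro n hn
        have hnB : n ∈ (B : Submodule K 𝔤) := by
          rw [hBNstar]
          exact Submodule.mem_sup_left hn
        have hqn : ql n = n := hqB n hnB
        have hnN : n ∈ (N : Submodule K 𝔤) := hNstarleN hn
        have hNsplit : (N : Submodule K 𝔤)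
            = ((J j : LieIdeal K 𝔤) : Submodule K 𝔤) ⊔ Mfull := by
          rw [← hJsup, hMfull]
          exact (sup_biSup_ne' (fun k => ((J k : LieIdeal K 𝔤) : Submodule K 𝔤)) j).symm
        rw [hNsplit, Submodule.mem_sup] at hnN
        obtain ⟨w, hw, m, hm, hsum'⟩ := hnN
        have hqm : n = ql m := by
          rw [← hqn, ← hsum', map_add, hqJj w hw, zero_add]
        rw [hqm]
        have hm' : ql m ∈ Submodule.map ql Mfull := ⟨m, hm, rfl⟩
        rw [hMfull, Submodule.map_iSup] at hm'
        have hconv : (⨆ k : {k : κ // k ≠ j},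
            Submodule.map ql ((J k.1 : LieIdeal K 𝔤) : Submodule K 𝔤))
            = ⨆ k : {k : κ // k ≠ j}, ((Jm k) : Submodule K 𝔤) :=
          iSup_congr fun k => (hJmcoe k).symm
        rw [hconv] at hm'
        exact hm'
    have hcard' : Fintype.card {i : ι // i ≠ i₀} = r := by
      have h1 : Fintype.card (Option {i : ι // i ≠ i₀}) = Fintype.card ι :=
        Fintype.card_congr (Equiv.optionSubtypeNe i₀)
      rw [Fintype.card_option] at h1
      omega
    obtain ⟨σ', hσ'⟩ := ih hcard' Nstar Cstar hcompl' (fun i => I i.1) Jm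
      (fun i => hI i.1) hJmmod
      (by
        intro i
        refine Disjoint.mono_right ?_ (hIind i.1)
        refine iSup_le fun l => iSup_le fun hl => ?_
        exact le_iSup_of_le l.1 (le_iSup_of_le (fun h => hl (Subtype.ext h)) le_rfl))
      hNstarcoe.symm hJmind hJmsup
    set σ : ι ≃ κ :=
      ((Equiv.optionSubtypeNe i₀).symm.trans (σ'.optionCongr)).trans
        (Equiv.optionSubtypeNe j) with hσdef
    refine ⟨σ, ?_⟩
    intro i
    by_cases hii : i = i₀
    · subst hii
      have hσi : σ i = j := by
        rw [hσdef]
        simp [Equiv.optionSubtypeNe_symm_self]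
      rw [hσi]
      exact ⟨Φ⟩
    · have hσi : σ i = (σ' ⟨i, hii⟩).1 := by
        rw [hσdef]
        simp [Equiv.optionSubtypeNe_symm_of_ne hii]
      rw [hσi]
      obtain ⟨E1⟩ := hσ' ⟨i, hii⟩
      obtain ⟨E2⟩ := hJmiso (σ' ⟨i, hii⟩)
      exact ⟨E1.trans E2.symm⟩


/-- Existence of a decomposition into indecomposables. -/
lemma exists_decomp_aux [Module.Finite K 𝔤] (n : ℕ) :
    ∀ (N : LieIdeal K 𝔤), Module.finrank K (N : Submodule K 𝔤) ≤ n →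
    ∃ (r : ℕ) (I : Fin r → LieIdeal K 𝔤), (∀ i, ModIndec (I i)) ∧
      iSupIndep (fun i => (I i : Submodule K 𝔤)) ∧
      (⨆ i, (I i : Submodule K 𝔤)) = (N : Submodule K 𝔤) := by
  haveI : FiniteDimensional K 𝔤 := inferInstance
  induction n with
  | zero =>
    intro N hN
    have hbot : (N : Submodule K 𝔤) = ⊥ := Submodule.finrank_eq_zero.mp (Nat.le_zero.mp hN)
    exact ⟨0, Fin.elim0, fun i => i.elim0, fun i => i.elim0,
      by rw [iSup_of_empty, hbot]⟩
  | succ n ih =>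
    intro N hN
    by_cases hbot : N = ⊥
    · exact ⟨0, Fin.elim0, fun i => i.elim0, fun i => i.elim0,
        by rw [iSup_of_empty, hbot, coe_bot']⟩
    · by_cases hind : ModIndec N
      · refine ⟨1, fun _ => N, fun _ => hind, ?_, ?_⟩
        · intro i
          have : (⨆ (j : Fin 1) (_ : j ≠ i), (N : Submodule K 𝔤)) = ⊥ := by
            rw [eq_bot_iff]
            refine iSup_le fun j => iSup_le fun hj => absurd (Subsingleton.elim j i) hj
          rw [this]
          exact disjoint_bot_right
        · exact ciSup_const
      · have hNnt : Nontrivial ↥N :=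
          (LieSubmodule.nontrivial_iff_ne_bot (R := K) (L := 𝔤) (M := 𝔤)).mpr hbot
        rw [ModIndec, not_and_or] at hind
        rcases hind with hc | hc
        · exact absurd hNnt hc
        push_neg at hc
        obtain ⟨A, B, hinf, hsup, hA, hB⟩ := hc
        have hAle : A ≤ N := le_of_le_of_eq le_sup_left hsup
        have hBle : B ≤ N := le_of_le_of_eq le_sup_right hsup
        have hlt : ∀ (X Y : LieIdeal K 𝔤), X ⊓ Y = ⊥ → X ⊔ Y = N → Y ≠ ⊥ →
            Module.finrank K (X : Submodule K 𝔤) ≤ n := by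
          intro X Y hXY hXYsup hYne
          have hXle : X ≤ N := le_of_le_of_eq le_sup_left hXYsup
          have hXne : X ≠ N := by
            rintro rfl
            apply hYne
            rw [eq_bot_iff]
            intro y hy
            have : y ∈ X ⊓ Y := ⟨hXYsup ▸ le_sup_right (a := X) (b := Y) hy, hy⟩
            rw [hXY] at this
            exact this
          have hXlt : (X : Submodule K 𝔤) < (N : Submodule K 𝔤) := by
            refine lt_of_le_of_ne hXle ?_
            intro hcoe
            exact hXne ((coe_eq_iff' X N).mp hcoe)
          have := Submodule.finrank_lt_finrank_of_lt hXlt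
          omega
        obtain ⟨r1, F1, hF1mod, hF1ind, hF1sup⟩ :=
          ih A (hlt A B hinf hsup hB)
        obtain ⟨r2, F2, hF2mod, hF2ind, hF2sup⟩ :=
          ih B (hlt B A (by rw [inf_comm]; exact hinf) (by rw [sup_comm]; exact hsup) hA)
        set G : Fin r1 ⊕ Fin r2 → LieIdeal K 𝔤 := Sum.elim F1 F2 with hG
        have hdisjAB : Disjoint (A : Submodule K 𝔤) (B : Submodule K 𝔤) := by
          rw [disjoint_iff, ← coe_inf', hinf, coe_bot']
        have hGind : iSupIndep (fun s => (G s : Submodule K 𝔤)) := by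
          intro s
          cases s with
          | inl i =>
            have hYle : (⨆ (t) (_ : t ≠ Sum.inl i), (G t : Submodule K 𝔤)) ≤
                (⨆ (i') (_ : i' ≠ i), (F1 i' : Submodule K 𝔤)) ⊔ (B : Submodule K 𝔤) := by
              refine iSup_le fun t => iSup_le fun ht => ?_
              cases t with
              | inl i' =>
                have hne : i' ≠ i := fun h => ht (by rw [h])
                exact le_sup_of_le_left (le_iSup_of_le i' (le_iSup_of_le hne le_rfl))
              | inr j => exact le_sup_of_le_right ((le_iSup _ j).trans hF2sup.le)
            refine Disjoint.mono_right hYle ?_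
            refine disjoint_aux ((le_iSup _ i).trans hF1sup.le)
              ((iSup_le fun i' => iSup_le fun _ => (le_iSup _ i').trans hF1sup.le)) ?_ hdisjAB
            exact hF1ind i
          | inr j =>
            have hYle : (⨆ (t) (_ : t ≠ Sum.inr j), (G t : Submodule K 𝔤)) ≤
                (⨆ (j') (_ : j' ≠ j), (F2 j' : Submodule K 𝔤)) ⊔ (A : Submodule K 𝔤) := by
              refine iSup_le fun t => iSup_le fun ht => ?_
              cases t with
              | inr j' =>
                have hne : j' ≠ j := fun h => ht (by rw [h])
                exact le_sup_of_le_left (le_iSup_of_le j' (le_iSup_of_le hne le_rfl))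
              | inl i' => exact le_sup_of_le_right ((le_iSup _ i').trans hF1sup.le)
            refine Disjoint.mono_right hYle ?_
            refine disjoint_aux ((le_iSup _ j).trans hF2sup.le)
              ((iSup_le fun j' => iSup_le fun _ => (le_iSup _ j').trans hF2sup.le)) ?_
              hdisjAB.symm
            exact hF2ind j
        refine ⟨r1 + r2, fun i => G (finSumFinEquiv.symm i), ?_, ?_, ?_⟩
        · intro i
          rcases h : finSumFinEquiv.symm i with i' | j'
          · show ModIndec (G (finSumFinEquiv.symm i)); rw [h]; exact hF1mod i'
          · show ModIndec (G (finSumFinEquiv.symm i)); rw [h]; exact hF2mod j'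
        · have := iSupIndep.comp (t := fun s => (G s : Submodule K 𝔤))
            (f := finSumFinEquiv.symm) hGind finSumFinEquiv.symm.injective
          exact this
        · rw [Equiv.iSup_comp (e := finSumFinEquiv.symm)
            (g := fun s => (G s : Submodule K 𝔤))]
          rw [iSup_sum]
          show (⨆ i, (F1 i : Submodule K 𝔤)) ⊔ (⨆ j, (F2 j : Submodule K 𝔤)) = _
          rw [hF1sup, hF2sup, ← coe_sup', hsup]

/-- Existence of a decomposition into indecomposables. -/
lemma exists_decomp [Module.Finite K 𝔤] (N : LieIdeal K 𝔤) :
    ∃ (r : ℕ) (I : Fin r → LieIdeal K 𝔤), (∀ i, ModIndec (I i)) ∧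
      iSupIndep (fun i => (I i : Submodule K 𝔤)) ∧
      (⨆ i, (I i : Submodule K 𝔤)) = (N : Submodule K 𝔤) :=
  exists_decomp_aux (Module.finrank K (N : Submodule K 𝔤)) N le_rfl

lemma modIndec_of_indec (N : LieIdeal K 𝔤) (h : IsIndecomposableLieAlgebra K ↥N) :
    ModIndec N := by
  refine ⟨h.1, ?_⟩
  intro A B hinf hsup
  have hAN : A ≤ N := le_of_le_of_eq le_sup_left hsup
  have hBN : B ≤ N := le_of_le_of_eq le_sup_right hsup
  -- restrict to ideals of ↥N
  let res : ∀ (A : LieIdeal K 𝔤), A ≤ N → LieIdeal K ↥N := fun A hA =>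
    { toSubmodule := Submodule.comap (N : Submodule K 𝔤).subtype (A : Submodule K 𝔤)
      lie_mem := by
        intro x m hm
        show ((⁅x, m⁆ : ↥N) : 𝔤) ∈ A
        show ⁅(x : 𝔤), (m : 𝔤)⁆ ∈ A
        exact A.lie_mem hm }
  have hres : ∀ (A : LieIdeal K 𝔤) (hA : A ≤ N) (m : ↥N), m ∈ res A hA ↔ (m : 𝔤) ∈ A :=
    fun _ _ _ => Iff.rfl
  have side1 : res A hAN ⊓ res B hBN = ⊥ := by
    rw [LieSubmodule.eq_bot_iff]
    rintro m ⟨hm1, hm2⟩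
    have : (m : 𝔤) ∈ A ⊓ B := ⟨hm1, hm2⟩
    rw [hinf] at this
    have h0 : (m : 𝔤) = 0 := by simpa using this
    exact Subtype.ext h0
  have side2 : res A hAN ⊔ res B hBN = ⊤ := by
    rw [eq_top_iff]
    intro m _
    have : (m : 𝔤) ∈ A ⊔ B := by rw [hsup]; exact m.2
    rw [LieSubmodule.mem_sup] at this
    obtain ⟨a, ha, b, hb, hab⟩ := this
    rw [LieSubmodule.mem_sup]
    refine ⟨⟨a, hAN ha⟩, ha, ⟨b, hBN hb⟩, hb, ?_⟩
    exact Subtype.ext hab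
  rcases h.2 (res A hAN) (res B hBN) side1 side2 with h1 | h1
  · left
    rw [LieSubmodule.eq_bot_iff]
    intro m hm
    have : (⟨m, hAN hm⟩ : ↥N) ∈ res A hAN := hm
    rw [h1] at this
    have h0 : (⟨m, hAN hm⟩ : ↥N) = 0 := by simpa using this
    simpa using congrArg Subtype.val h0
  · right
    rw [LieSubmodule.eq_bot_iff]
    intro m hm
    have : (⟨m, hBN hm⟩ : ↥N) ∈ res B hBN := hm
    rw [h1] at this
    have h0 : (⟨m, hBN hm⟩ : ↥N) = 0 := by simpa using this
    simpa using congrArg Subtype.val h0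

lemma indec_of_modIndec (N C : LieIdeal K 𝔤)
    (hc : IsCompl (N : Submodule K 𝔤) (C : Submodule K 𝔤)) (h : ModIndec N) :
    IsIndecomposableLieAlgebra K ↥N := by
  refine ⟨h.1, ?_⟩
  intro A B hinf hsup
  -- lift ideals of ↥N to ideals of 𝔤
  let lift : LieIdeal K ↥N → LieIdeal K 𝔤 := fun A =>
    { toSubmodule := Submodule.map (N : Submodule K 𝔤).subtype (A : Submodule K ↥N)
      lie_mem := by
        rintro x m ⟨a, ha, rfl⟩
        have hx : x ∈ (N : Submodule K 𝔤) ⊔ (C : Submodule K 𝔤) := by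
          rw [codisjoint_iff.mp hc.codisjoint]; trivial
        rw [Submodule.mem_sup] at hx
        obtain ⟨nn, hnn, c, hcc, rfl⟩ := hx
        have hz : ⁅c, ((N : Submodule K 𝔤).subtype a : 𝔤)⁆ = 0 :=
          lie_eq_zero_of_disjoint (hc.disjoint.symm) hcc a.2
        have hdecomp : ⁅nn + c, ((N : Submodule K 𝔤).subtype a : 𝔤)⁆
            = ((⁅(⟨nn, hnn⟩ : ↥N), a⁆ : ↥N) : 𝔤) := by
          rw [add_lie, hz, add_zero]
          rfl
        exact Submodule.mem_map.mpr ⟨(show ↥N from ⁅(⟨nn, hnn⟩ : ↥N), a⁆), A.lie_mem ha, hdecomp.symm⟩ }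
  have hliftmem : ∀ (A : LieIdeal K ↥N) (x : 𝔤),
      x ∈ lift A ↔ ∃ a : ↥N, a ∈ A ∧ (a : 𝔤) = x := by
    intro A x
    constructor
    · rintro ⟨a, ha, rfl⟩; exact ⟨a, ha, rfl⟩
    · rintro ⟨a, ha, rfl⟩; exact ⟨a, ha, rfl⟩
  have side1 : lift A ⊓ lift B = ⊥ := by
    rw [LieSubmodule.eq_bot_iff]
    rintro m ⟨hm1, hm2⟩
    obtain ⟨a, ha, rfl⟩ := (hliftmem A m).mp hm1
    obtain ⟨b, hb, hba⟩ := (hliftmem B _).mp hm2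
    have hab : b = a := Subtype.ext hba
    subst hab
    have : b ∈ A ⊓ B := ⟨ha, hb⟩
    rw [hinf] at this
    have h0 : b = 0 := by simpa using this
    rw [h0]; rfl
  have side2 : lift A ⊔ lift B = N := by
    apply le_antisymm
    · intro x hx
      rcases (LieSubmodule.mem_sup (N := lift A) (N' := lift B) x).mp hx with ⟨y, hy, z, hz, hyz⟩
      obtain ⟨a, _, rfl⟩ := (hliftmem _ y).mp hy
      obtain ⟨b, _, rfl⟩ := (hliftmem _ z).mp hz
      rw [← hyz]
      exact add_mem a.2 b.2
    · intro x hx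
      have : (⟨x, hx⟩ : ↥N) ∈ A ⊔ B := by rw [hsup]; trivial
      rw [LieSubmodule.mem_sup] at this
      obtain ⟨a, ha, b, hb, hab⟩ := this
      rw [LieSubmodule.mem_sup]
      exact ⟨(a : 𝔤), ⟨a, ha, rfl⟩, (b : 𝔤), ⟨b, hb, rfl⟩,
        by rw [show ((a : 𝔤) + b) = ((a + b : ↥N) : 𝔤) from rfl, hab]⟩
  rcases h.2 (lift A) (lift B) side1 side2 with h1 | h1
  · left
    rw [LieSubmodule.eq_bot_iff]
    intro a ha
    have : (a : 𝔤) ∈ lift A := ⟨a, ha, rfl⟩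
    rw [h1] at this
    have h0 : (a : 𝔤) = 0 := by simpa using this
    exact Subtype.ext h0
  · right
    rw [LieSubmodule.eq_bot_iff]
    intro a ha
    have : (a : 𝔤) ∈ lift B := ⟨a, ha, rfl⟩
    rw [h1] at this
    have h0 : (a : 𝔤) = 0 := by simpa using this
    exact Subtype.ext h0

end Infra

/-- **Krull–Schmidt for finite-dimensional Lie algebras.** Every
finite-dimensional Lie algebra over a field is an internal direct sum of indecomposable
ideals, uniquely so up to permutation and isomorphism of the summands. -/
theorem lie_krull_schmidt (K 𝔤 : Type*) [Field K] [LieRing 𝔤] [LieAlgebra K 𝔤]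
    [Module.Finite K 𝔤] :
    ∃ (r : ℕ) (I : Fin r → LieIdeal K 𝔤),
      (∀ i, IsIndecomposableLieAlgebra K ↥(I i)) ∧
      DirectSum.IsInternal (fun i => (I i : Submodule K 𝔤)) ∧
      ∀ (s : ℕ) (J : Fin s → LieIdeal K 𝔤),
        (∀ j, IsIndecomposableLieAlgebra K ↥(J j)) →
        DirectSum.IsInternal (fun j => (J j : Submodule K 𝔤)) →
        ∃ σ : Fin r ≃ Fin s, ∀ i, Nonempty (↥(I i) ≃ₗ⁅K⁆ ↥(J (σ i))) := by
  obtain ⟨r, I, hmi, hind, hsup⟩ := exists_decomp (K := K) (𝔤 := 𝔤) ⊤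
  rw [coe_top'] at hsup
  refine ⟨r, I, ?_, ?_, ?_⟩
  · intro i
    refine indec_of_modIndec (I i) (⨆ i' : {i' // i' ≠ i}, I i'.1) ?_ (hmi i)
    rw [coe_iSup']
    constructor
    · rw [iSup_subtype]
      exact hind i
    · rw [codisjoint_iff, sup_biSup_ne' (fun i => (I i : Submodule K 𝔤)) i, hsup]
  · exact (DirectSum.isInternal_submodule_iff_iSupIndep_and_iSup_eq_top _).mpr ⟨hind, hsup⟩
  · intro s J hJindec hJint
    rw [DirectSum.isInternal_submodule_iff_iSupIndep_and_iSup_eq_top] at hJint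
    exact key r (by simp) ⊤ ⊥ (by rw [coe_top', coe_bot']; exact isCompl_top_bot) I J hmi
      (fun j => modIndec_of_indec _ (hJindec j)) hind (by rw [hsup, coe_top'])
      hJint.1 (by rw [hJint.2, coe_top'])
end
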